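/- arXiv:1907.07842 — 5 statements merged into one kernel-verified Lean document; each statement's English description precedes it below -/
import Mathlib

section
/- Suppose u_h, v_h, ω_h : [0,T] → V_h^k are differentiable in t and satisfy, for every cell I'_j and all test functions φ, ϕ, ψ ∈ V_h^k: ((v_h)_t, φ)_{I'_j} = (u_h, φ)_{I'_j} + ⟨{ω_h}, φ⟩_{I'_j} − (ω_h, φ_x)_{I'_j}; (v_h, ϕ)_{I'_j} = ⟨{u_h}, ϕ⟩_{I'_j} − (u_h, ϕ_x)_{I'_j}; and (ω_h, ψ)_{I'_j} = ⟨f̂(u_h), ψ⟩_{I'_j} − (f(u_h), ψ_x)_{I'_j}, where f(u) = u³/6, F(u) = u⁴/24, and at each interface the nonlinear flux is f̂(u_h) = ⟦F(u_h)⟧/⟦u_h⟧ if ⟦u_h⟧ ≠ 0 and f̂(u_h) = f({u_h}) if ⟦u_h⟧ = 0, with periodic boundary conditions. Then the discrete energy E_0(u_h) = ∫_{x_L}^{x_R} u_h(x,t)² dx is conserved: d/dt ∫_{x_L}^{x_R} u_h² dx = 0 for all t. -/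
open MeasureTheory Polynomial
open scoped Classical

noncomputable section

/- Mesh with `N + 1` cells: cell `j` is `I'_j = [grid j.castSucc, grid j.succ]`.
A DG function in `V_h^k` is represented by the family of its polynomial restrictions
to the cells; interfaces are treated periodically (indices modulo the number of cells). -/

/-- Left endpoint of cell `j`. -/
def lep {N : ℕ} (grid : Fin (N + 2) → ℝ) (j : Fin (N + 1)) : ℝ := grid j.castSucc

/-- Right endpoint of cell `j`. -/
def rep {N : ℕ} (grid : Fin (N + 2) → ℝ) (j : Fin (N + 1)) : ℝ := grid j.succ

/-- `∫_{I'_j} f dx`. -/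
def cellInt {N : ℕ} (grid : Fin (N + 2) → ℝ) (j : Fin (N + 1)) (f : ℝ → ℝ) : ℝ :=
  ∫ y in lep grid j..rep grid j, f y

/-- Trace `w⁻` at the interface `x_{j+1/2}`, from the left cell `I'_j`. -/
def trM {N : ℕ} (grid : Fin (N + 2) → ℝ) (f : Fin (N + 1) → Polynomial ℝ)
    (j : Fin (N + 1)) : ℝ :=
  (f j).eval (rep grid j)

/-- Trace `w⁺` at the interface `x_{j+1/2}`, from the right cell `I'_{j+1}`
(cyclically, realizing the periodic boundary conditions). -/
def trP {N : ℕ} (grid : Fin (N + 2) → ℝ) (f : Fin (N + 1) → Polynomial ℝ)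
    (j : Fin (N + 1)) : ℝ :=
  (f (j + 1)).eval (lep grid (j + 1))

/-- Average `{w} = (w⁺ + w⁻)/2` at the interface `x_{j+1/2}`. -/
def avg {N : ℕ} (grid : Fin (N + 2) → ℝ) (f : Fin (N + 1) → Polynomial ℝ)
    (j : Fin (N + 1)) : ℝ :=
  (trP grid f j + trM grid f j) / 2

/-- Boundary bracket `⟨ĥ, φ⟩_{I'_j} = ĥ_{j+1/2} φ⁻_{j+1/2} - ĥ_{j-1/2} φ⁺_{j-1/2}`, where the
interface values `ĥ` are indexed by the right interface of each cell (periodically). -/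
def brk {N : ℕ} (grid : Fin (N + 2) → ℝ) (hat : Fin (N + 1) → ℝ) (φ : Polynomial ℝ)
    (j : Fin (N + 1)) : ℝ :=
  hat j * φ.eval (rep grid j) - hat (j - 1) * φ.eval (lep grid j)

/-- The conservative nonlinear flux `f̂(u_h)` for `f(u) = u³/6`, `F(u) = u⁴/24`:
`f̂ = ⟦F(u_h)⟧/⟦u_h⟧` if `⟦u_h⟧ ≠ 0` and `f̂ = f({u_h})` otherwise. -/
def fhat {N : ℕ} (grid : Fin (N + 2) → ℝ) (u : Fin (N + 1) → Polynomial ℝ)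
    (j : Fin (N + 1)) : ℝ :=
  if trP grid u j = trM grid u j then ((trP grid u j + trM grid u j) / 2) ^ 3 / 6
  else ((trP grid u j) ^ 4 / 24 - (trM grid u j) ^ 4 / 24) / (trP grid u j - trM grid u j)

/-!
Test the first equation with `φ = ∂ₜu_h` and `φ = ω_h`, and the time derivative of the second
equation with the same test functions. Subtracting expresses `(u_h, φ)` as
`B(∂ₜu_h, φ) - B(ω_h, φ)`, where `B(a, b) = Σ_j ⟨{a}, b⟩_{I'_j} - (a, b_x)_{I'_j}` is the
central-flux form. With periodic boundary conditions `B` is antisymmetric, so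
`(u_h, ∂ₜu_h) = -B(ω_h, ∂ₜu_h) = B(∂ₜu_h, ω_h) = (u_h, ω_h)`. Testing the third equation with
`ψ = u_h` gives `(u_h, ω_h) = 0`: `f̂` is exactly the flux whose boundary terms telescope
against `(f(u_h), (u_h)_x) = ∫ F(u_h)_x`.

Time derivatives pass under the integrals because a polynomial of degree `≤ k` is a fixed
linear combination of its values at `k + 1` nodes.
-/

def natLagrangeBasis (k : ℕ) (i : Fin (k + 1)) : ℝ[X] :=
  Lagrange.basis Finset.univ (fun i : Fin (k + 1) => (i : ℝ)) i

section NodalExpansion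

variable {k : ℕ}

lemma natLagrangeNodes_injOn (k : ℕ) :
    Set.InjOn (fun i : Fin (k + 1) => (i : ℝ)) (Finset.univ : Finset (Fin (k + 1))) :=
  (Nat.cast_injective.comp Fin.val_injective).injOn

lemma natDegree_natLagrangeBasis_le (i : Fin (k + 1)) :
    (natLagrangeBasis k i).natDegree ≤ k := by
  simp [natLagrangeBasis, Lagrange.natDegree_basis (natLagrangeNodes_injOn k) (Finset.mem_univ i)]

lemma eval_eq_sum_natLagrangeBasis {p : ℝ[X]} (hp : p.natDegree ≤ k) (y : ℝ) :
    p.eval y = ∑ i : Fin (k + 1), p.eval ((i : ℕ) : ℝ) * (natLagrangeBasis k i).eval y := by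
  have hlt : p.degree < (Finset.univ : Finset (Fin (k + 1))).card := by
    rw [Finset.card_univ, Fintype.card_fin]
    exact (degree_le_of_natDegree_le hp).trans_lt (by exact_mod_cast Nat.lt_succ_self k)
  conv_lhs => rw [Lagrange.eq_interpolate (natLagrangeNodes_injOn k) hlt]
  simp [Lagrange.interpolate_apply, eval_finsetSum, natLagrangeBasis]

/-- The derivative is the Lagrange interpolant of the nodal derivatives. -/
lemma natDegree_le_of_hasDerivAt_eval {P : ℝ → ℝ[X]} {Q : ℝ[X]} {t : ℝ}
    (hP : ∀ τ, (P τ).natDegree ≤ k)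
    (hQ : ∀ y, HasDerivAt (fun τ => (P τ).eval y) (Q.eval y) t) :
    Q.natDegree ≤ k := by
  have hexp : ∀ y, Q.eval y
      = ∑ i : Fin (k + 1), Q.eval ((i : ℕ) : ℝ) * (natLagrangeBasis k i).eval y := fun y =>
    (hQ y).unique <| by
      simp_rw [eval_eq_sum_natLagrangeBasis (hP _) y]
      exact HasDerivAt.fun_sum fun i _ => (hQ i).mul_const _
  have hQ_eq : Q = ∑ i : Fin (k + 1), C (Q.eval ((i : ℕ) : ℝ)) * natLagrangeBasis k i :=
    Polynomial.funext fun y => by simp [hexp y, eval_finsetSum]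
  rw [hQ_eq]
  exact natDegree_sum_le_of_forall_le _ _ fun i _ =>
    (natDegree_C_mul_le _ _).trans (natDegree_natLagrangeBasis_le i)

lemma intervalIntegral_eval_mul_eq_sum {p : ℝ[X]} (hp : p.natDegree ≤ k) {r : ℝ → ℝ}
    (hr : Continuous r) (a b : ℝ) :
    ∫ y in a..b, p.eval y * r y
      = ∑ i : Fin (k + 1),
          p.eval ((i : ℕ) : ℝ) * ∫ y in a..b, r y * (natLagrangeBasis k i).eval y := by
  calc ∫ y in a..b, p.eval y * r y
      = ∫ y in a..b, ∑ i : Fin (k + 1),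
          p.eval ((i : ℕ) : ℝ) * (r y * (natLagrangeBasis k i).eval y) :=
        intervalIntegral.integral_congr fun y _ => by
          rw [eval_eq_sum_natLagrangeBasis hp y, Finset.sum_mul]
          exact Finset.sum_congr rfl fun i _ => by ring
    _ = _ := by
      rw [intervalIntegral.integral_finsetSum fun i _ =>
        Continuous.intervalIntegrable (by fun_prop) _ _]
      simp only [intervalIntegral.integral_const_mul]

lemma hasDerivAt_intervalIntegral_eval_mul {P : ℝ → ℝ[X]} {Q : ℝ[X]} {t : ℝ}
    (hP : ∀ τ, (P τ).natDegree ≤ k)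
    (hQ : ∀ y, HasDerivAt (fun τ => (P τ).eval y) (Q.eval y) t)
    {r : ℝ → ℝ} (hr : Continuous r) (a b : ℝ) :
    HasDerivAt (fun τ => ∫ y in a..b, (P τ).eval y * r y) (∫ y in a..b, Q.eval y * r y) t := by
  simp_rw [intervalIntegral_eval_mul_eq_sum (hP _) hr,
    intervalIntegral_eval_mul_eq_sum (natDegree_le_of_hasDerivAt_eval hP hQ) hr]
  exact HasDerivAt.fun_sum fun i _ => (hQ i).mul_const _

lemma hasDerivAt_intervalIntegral_eval_sq {P : ℝ → ℝ[X]} {Q : ℝ[X]} {t : ℝ}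
    (hP : ∀ τ, (P τ).natDegree ≤ k)
    (hQ : ∀ y, HasDerivAt (fun τ => (P τ).eval y) (Q.eval y) t)
    (a b : ℝ) :
    HasDerivAt (fun τ => ∫ y in a..b, (P τ).eval y ^ 2)
      (2 * ∫ y in a..b, (P t).eval y * Q.eval y) t := by
  have hQk := natDegree_le_of_hasDerivAt_eval hP hQ
  have hexpand : ∀ τ, ∫ y in a..b, (P τ).eval y ^ 2
      = ∑ i : Fin (k + 1),
          (P τ).eval ((i : ℕ) : ℝ) * ∫ y in a..b, (P τ).eval y * (natLagrangeBasis k i).eval y :=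
    fun τ => by simp_rw [sq, intervalIntegral_eval_mul_eq_sum (hP τ) (P τ).continuous]
  have hsum : HasDerivAt (fun τ => ∑ i : Fin (k + 1), (P τ).eval ((i : ℕ) : ℝ)
        * ∫ y in a..b, (P τ).eval y * (natLagrangeBasis k i).eval y)
      (∑ i : Fin (k + 1),
        (Q.eval ((i : ℕ) : ℝ) * (∫ y in a..b, (P t).eval y * (natLagrangeBasis k i).eval y)
          + (P t).eval ((i : ℕ) : ℝ) * ∫ y in a..b, Q.eval y * (natLagrangeBasis k i).eval y)) t :=
    HasDerivAt.fun_sum fun i _ =>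
      (hQ _).fun_mul (hasDerivAt_intervalIntegral_eval_mul hP hQ (Polynomial.continuous _) a b)
  convert hsum using 1
  · exact funext hexpand
  · rw [Finset.sum_add_distrib, ← intervalIntegral_eval_mul_eq_sum hQk (P t).continuous,
      ← intervalIntegral_eval_mul_eq_sum (hP t) Q.continuous, two_mul]
    congr 1
    exact intervalIntegral.integral_congr fun y _ => mul_comm _ _

end NodalExpansion

section PeriodicMesh

variable {N : ℕ} (grid : Fin (N + 2) → ℝ)

lemma trP_sub_one (f : Fin (N + 1) → ℝ[X]) (j : Fin (N + 1)) :
    trP grid f (j - 1) = (f j).eval (lep grid j) := by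
  rw [trP, sub_add_cancel]

lemma sum_brk (hat : Fin (N + 1) → ℝ) (f : Fin (N + 1) → ℝ[X]) :
    ∑ j, brk grid hat (f j) j = ∑ j, hat j * (trM grid f j - trP grid f j) := by
  have hshift : ∑ j, hat (j - 1) * (f j).eval (lep grid j) = ∑ j, hat j * trP grid f j :=
    Fintype.sum_equiv (Equiv.subRight 1) _ _ fun j => by rw [Equiv.subRight_apply, trP_sub_one]
  simp only [brk, mul_sub, Finset.sum_sub_distrib, hshift]
  rfl

lemma sum_cellInt_derivative (r : Fin (N + 1) → ℝ[X]) :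
    ∑ j, cellInt grid j (fun y => (r j).derivative.eval y)
      = ∑ j, (trM grid r j - trP grid r j) := by
  have hcell : ∀ j, cellInt grid j (fun y => (r j).derivative.eval y)
      = (r j).eval (rep grid j) - (r j).eval (lep grid j) := fun j =>
    intervalIntegral.integral_eq_sub_of_hasDerivAt (fun y _ => (r j).hasDerivAt y)
      ((r j).derivative.continuous.intervalIntegrable _ _)
  have hshift : ∑ j, (r j).eval (lep grid j) = ∑ j, trP grid r j :=
    Fintype.sum_equiv (Equiv.subRight 1) _ _ fun j => by rw [Equiv.subRight_apply, trP_sub_one]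
  simp only [hcell, Finset.sum_sub_distrib, hshift]
  rfl

lemma cellInt_mul_derivative_add (j : Fin (N + 1)) (p q : ℝ[X]) :
    cellInt grid j (fun y => p.eval y * q.derivative.eval y)
      + cellInt grid j (fun y => q.eval y * p.derivative.eval y)
      = cellInt grid j (fun y => (p * q).derivative.eval y) := by
  rw [cellInt, cellInt, ← intervalIntegral.integral_add
    (Continuous.intervalIntegrable (by fun_prop) _ _)
    (Continuous.intervalIntegrable (by fun_prop) _ _)]
  refine intervalIntegral.integral_congr fun y _ => ?_
  simp only [derivative_mul, eval_add, eval_mul]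
  ring

def dgInner (a b : Fin (N + 1) → ℝ[X]) : ℝ :=
  ∑ j, cellInt grid j (fun y => (a j).eval y * (b j).eval y)

lemma dgInner_comm (a b : Fin (N + 1) → ℝ[X]) : dgInner grid a b = dgInner grid b a :=
  Finset.sum_congr rfl fun j _ => congrArg (cellInt grid j) (funext fun _ => mul_comm _ _)

/-- `⟨{a}, b⟩ - (a, b_x)` summed over the cells: the DG approximation of `(a_x, b)` with the
central flux `â = {a}`. -/
def centralFluxForm (a b : Fin (N + 1) → ℝ[X]) : ℝ :=
  ∑ j, (brk grid (avg grid a) (b j) j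
    - cellInt grid j (fun y => (a j).eval y * (b j).derivative.eval y))

lemma centralFluxForm_add_swap (a b : Fin (N + 1) → ℝ[X]) :
    centralFluxForm grid a b + centralFluxForm grid b a = 0 := by
  have hparts := sum_cellInt_derivative grid (fun j => a j * b j)
  simp only [← cellInt_mul_derivative_add, Finset.sum_add_distrib] at hparts
  have hjumps : ∑ j, avg grid a j * (trM grid b j - trP grid b j)
      + ∑ j, avg grid b j * (trM grid a j - trP grid a j)
      = ∑ j, (trM grid (fun j => a j * b j) j - trP grid (fun j => a j * b j) j) := by
    rw [← Finset.sum_add_distrib]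
    exact Finset.sum_congr rfl fun j _ => by simp only [avg, trM, trP, eval_mul]; ring
  simp only [centralFluxForm, Finset.sum_sub_distrib, sum_brk]
  linarith

lemma centralFluxForm_self (a : Fin (N + 1) → ℝ[X]) : centralFluxForm grid a a = 0 := by
  linarith [centralFluxForm_add_swap grid a a]

lemma fhat_mul_sub (u : Fin (N + 1) → ℝ[X]) (j : Fin (N + 1)) :
    fhat grid u j * (trM grid u j - trP grid u j)
      = trM grid u j ^ 4 / 24 - trP grid u j ^ 4 / 24 := by
  unfold fhat
  split_ifs with h
  · rw [h]; ring
  · field_simp [sub_ne_zero.mpr h]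
    ring

lemma sum_brk_fhat (u : Fin (N + 1) → ℝ[X]) :
    ∑ j, brk grid (fhat grid u) (u j) j
      = ∑ j, cellInt grid j (fun y => (u j).eval y ^ 3 / 6 * (u j).derivative.eval y) := by
  have hprimitive : ∀ j, cellInt grid j (fun y => (u j).eval y ^ 3 / 6 * (u j).derivative.eval y)
      = cellInt grid j (fun y => (C (1 / 24 : ℝ) * u j ^ 4).derivative.eval y) := by
    refine fun j => congrArg (cellInt grid j) (funext fun y => ?_)
    simp only [derivative_mul, derivative_C, zero_mul, zero_add, derivative_pow, eval_mul,
      eval_C, eval_pow]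
    ring
  rw [sum_brk, Finset.sum_congr rfl fun j _ => hprimitive j, sum_cellInt_derivative]
  refine Finset.sum_congr rfl fun j _ => ?_
  rw [fhat_mul_sub]
  simp only [trM, trP, eval_mul, eval_pow, eval_C]
  ring

variable {k : ℕ} {t : ℝ}

lemma hasDerivAt_brk_avg {u : ℝ → Fin (N + 1) → ℝ[X]} {u' : Fin (N + 1) → ℝ[X]}
    (hu' : ∀ j y, HasDerivAt (fun τ => (u τ j).eval y) ((u' j).eval y) t) (φ : ℝ[X])
    (j : Fin (N + 1)) :
    HasDerivAt (fun τ => brk grid (avg grid (u τ)) φ j) (brk grid (avg grid u') φ j) t := by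
  have havg : ∀ i, HasDerivAt (fun τ => avg grid (u τ) i) (avg grid u' i) t := fun i =>
    ((hu' _ _).add (hu' _ _)).div_const 2
  exact ((havg j).mul_const _).sub ((havg (j - 1)).mul_const _)

lemma cellInt_mul_eq_brk_avg_sub_of_hasDerivAt {u v : ℝ → Fin (N + 1) → ℝ[X]}
    {u' v' : Fin (N + 1) → ℝ[X]} {j : Fin (N + 1)} {φ : ℝ[X]}
    (hu : ∀ τ, (u τ j).natDegree ≤ k) (hv : ∀ τ, (v τ j).natDegree ≤ k)
    (hu' : ∀ j y, HasDerivAt (fun τ => (u τ j).eval y) ((u' j).eval y) t)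
    (hv' : ∀ j y, HasDerivAt (fun τ => (v τ j).eval y) ((v' j).eval y) t)
    (h : ∀ τ, cellInt grid j (fun y => (v τ j).eval y * φ.eval y)
      = brk grid (avg grid (u τ)) φ j
        - cellInt grid j (fun y => (u τ j).eval y * φ.derivative.eval y)) :
    cellInt grid j (fun y => (v' j).eval y * φ.eval y)
      = brk grid (avg grid u') φ j
        - cellInt grid j (fun y => (u' j).eval y * φ.derivative.eval y) := by
  have hlhs : HasDerivAt (fun τ => cellInt grid j (fun y => (v τ j).eval y * φ.eval y))
      (cellInt grid j (fun y => (v' j).eval y * φ.eval y)) t :=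
    hasDerivAt_intervalIntegral_eval_mul hv (hv' j) φ.continuous _ _
  have hrhs := (hasDerivAt_brk_avg grid hu' φ j).sub
    (hasDerivAt_intervalIntegral_eval_mul hu (hu' j) φ.derivative.continuous
      (lep grid j) (rep grid j))
  rw [funext h] at hlhs
  exact hlhs.unique hrhs

lemma hasDerivAt_sum_cellInt_sq {u : ℝ → Fin (N + 1) → ℝ[X]} {u' : Fin (N + 1) → ℝ[X]}
    (hu : ∀ τ j, (u τ j).natDegree ≤ k)
    (hu' : ∀ j y, HasDerivAt (fun τ => (u τ j).eval y) ((u' j).eval y) t) :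
    HasDerivAt (fun τ => ∑ j, cellInt grid j (fun y => (u τ j).eval y ^ 2))
      (2 * dgInner grid (u t) u') t := by
  rw [dgInner, Finset.mul_sum]
  exact HasDerivAt.fun_sum fun j _ =>
    hasDerivAt_intervalIntegral_eval_sq (fun τ => hu τ j) (hu' j) _ _

end PeriodicMesh

theorem shortPulse_DG_E0_conserved_general
    (N k : ℕ) (grid : Fin (N + 2) → ℝ)
    (u v w u' v' : ℝ → Fin (N + 1) → Polynomial ℝ)
    (hdeg : ∀ t j, (u t j).natDegree ≤ k ∧ (v t j).natDegree ≤ k ∧ (w t j).natDegree ≤ k)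
    (hu' : ∀ (t : ℝ) (j : Fin (N + 1)) (y : ℝ),
      HasDerivAt (fun τ => (u τ j).eval y) ((u' t j).eval y) t)
    (hv' : ∀ (t : ℝ) (j : Fin (N + 1)) (y : ℝ),
      HasDerivAt (fun τ => (v τ j).eval y) ((v' t j).eval y) t)
    (scheme1 : ∀ (t : ℝ) (j : Fin (N + 1)) (φ : Polynomial ℝ), φ.natDegree ≤ k →
      cellInt grid j (fun y => (v' t j).eval y * φ.eval y)
        = cellInt grid j (fun y => (u t j).eval y * φ.eval y)
          + brk grid (avg grid (w t)) φ j
          - cellInt grid j (fun y => (w t j).eval y * φ.derivative.eval y))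
    (scheme2 : ∀ (t : ℝ) (j : Fin (N + 1)) (φ : Polynomial ℝ), φ.natDegree ≤ k →
      cellInt grid j (fun y => (v t j).eval y * φ.eval y)
        = brk grid (avg grid (u t)) φ j
          - cellInt grid j (fun y => (u t j).eval y * φ.derivative.eval y))
    (scheme3 : ∀ (t : ℝ) (j : Fin (N + 1)) (φ : Polynomial ℝ), φ.natDegree ≤ k →
      cellInt grid j (fun y => (w t j).eval y * φ.eval y)
        = brk grid (fhat grid (u t)) φ j
          - cellInt grid j (fun y => ((u t j).eval y) ^ 3 / 6 * φ.derivative.eval y))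
    (t : ℝ) :
    HasDerivAt (fun τ => ∑ j, cellInt grid j (fun y => ((u τ j).eval y) ^ 2)) 0 t := by
  have hu'deg : ∀ j, (u' t j).natDegree ≤ k := fun j =>
    natDegree_le_of_hasDerivAt_eval (fun τ => (hdeg τ j).1) (hu' t j)
  have scheme2_t : ∀ j φ, φ.natDegree ≤ k →
      cellInt grid j (fun y => (v' t j).eval y * φ.eval y)
        = brk grid (avg grid (u' t)) φ j
          - cellInt grid j (fun y => (u' t j).eval y * φ.derivative.eval y) := fun j φ hφ =>
    cellInt_mul_eq_brk_avg_sub_of_hasDerivAt grid (fun τ => (hdeg τ j).1)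
      (fun τ => (hdeg τ j).2.1) (hu' t) (hv' t) fun τ => scheme2 τ j φ hφ
  have hflux : ∀ b : Fin (N + 1) → ℝ[X], (∀ j, (b j).natDegree ≤ k) →
      dgInner grid (u t) b = centralFluxForm grid (u' t) b - centralFluxForm grid (w t) b := by
    intro b hb
    simp only [dgInner, centralFluxForm, ← Finset.sum_sub_distrib]
    exact Finset.sum_congr rfl fun j _ => by
      linarith [scheme1 t j (b j) (hb j), scheme2_t j (b j) (hb j)]
  have hw : dgInner grid (u t) (w t) = 0 := by
    rw [dgInner_comm, dgInner, Finset.sum_congr rfl fun j _ => scheme3 t j (u t j) (hdeg t j).1,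
      Finset.sum_sub_distrib, sum_brk_fhat, sub_self]
  have hut : dgInner grid (u t) (u' t) = 0 := by
    linarith [hflux (u' t) hu'deg, hflux (w t) fun j => (hdeg t j).2.2,
      centralFluxForm_self grid (u' t), centralFluxForm_self grid (w t),
      centralFluxForm_add_swap grid (u' t) (w t)]
  simpa [hut] using hasDerivAt_sum_cellInt_sq grid (fun τ j => (hdeg τ j).1) (hu' t)

/-- **`E₀`-conservation of the semi-discrete DG scheme for the short pulse equation
`u_{xt} = u + (1/6)(u³)_{xx}`** (written as `v_t = u + ω_x`, `v = u_x`, `ω = (u³/6)_x`),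
with periodic boundary conditions and numerical fluxes `ω̂ = {ω}`, `û = {u}`, and the
conservative flux `f̂(u)`. The discrete energy `E₀(u_h) = ∫_I u_h² dx` satisfies
`d/dt E₀(u_h) = 0` for all `t`. -/
theorem shortPulse_DG_E0_conserved
    (N k : ℕ) (grid : Fin (N + 2) → ℝ) (hgrid : StrictMono grid)
    (u v w u' v' w' : ℝ → Fin (N + 1) → Polynomial ℝ)
    (hdeg : ∀ t j, (u t j).natDegree ≤ k ∧ (v t j).natDegree ≤ k ∧ (w t j).natDegree ≤ k)
    (hu' : ∀ (t : ℝ) (j : Fin (N + 1)) (y : ℝ),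
      HasDerivAt (fun τ => (u τ j).eval y) ((u' t j).eval y) t)
    (hv' : ∀ (t : ℝ) (j : Fin (N + 1)) (y : ℝ),
      HasDerivAt (fun τ => (v τ j).eval y) ((v' t j).eval y) t)
    (hw' : ∀ (t : ℝ) (j : Fin (N + 1)) (y : ℝ),
      HasDerivAt (fun τ => (w τ j).eval y) ((w' t j).eval y) t)
    (scheme1 : ∀ (t : ℝ) (j : Fin (N + 1)) (φ : Polynomial ℝ), φ.natDegree ≤ k →
      cellInt grid j (fun y => (v' t j).eval y * φ.eval y)
        = cellInt grid j (fun y => (u t j).eval y * φ.eval y)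
          + brk grid (avg grid (w t)) φ j
          - cellInt grid j (fun y => (w t j).eval y * φ.derivative.eval y))
    (scheme2 : ∀ (t : ℝ) (j : Fin (N + 1)) (φ : Polynomial ℝ), φ.natDegree ≤ k →
      cellInt grid j (fun y => (v t j).eval y * φ.eval y)
        = brk grid (avg grid (u t)) φ j
          - cellInt grid j (fun y => (u t j).eval y * φ.derivative.eval y))
    (scheme3 : ∀ (t : ℝ) (j : Fin (N + 1)) (φ : Polynomial ℝ), φ.natDegree ≤ k →
      cellInt grid j (fun y => (w t j).eval y * φ.eval y)
        = brk grid (fhat grid (u t)) φ j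
          - cellInt grid j (fun y => ((u t j).eval y) ^ 3 / 6 * φ.derivative.eval y))
    (t : ℝ) :
    HasDerivAt (fun τ => ∑ j, cellInt grid j (fun y => ((u τ j).eval y) ^ 2)) 0 t :=
  shortPulse_DG_E0_conserved_general N k grid u v w u' v' hdeg hu' hv' scheme1 scheme2 scheme3 t
end
end

section
/- Suppose ρ_h, ω_h, u_h : [0,T] → V_h^k (with ρ_h, ω_h differentiable in s) satisfy, for every cell I_j and all test functions φ, ϕ, ψ ∈ V_h^k: ((ρ_h)_s, φ)_{I_j} + (u_h ω_h, φ)_{I_j} = 0; ((ω_h)_s, ϕ)_{I_j} = (ρ_h u_h, ϕ)_{I_j}; and (ω_h, ψ)_{I_j} = ⟨u_h⁺, ψ⟩_{I_j} − (u_h, ψ_y)_{I_j}. Then the discrete quantity H_1(ρ_h, ω_h) = ∫_{y_L}^{y_R} (ρ_h² + ω_h²) dy is conserved: d/ds ∫_{y_L}^{y_R} (ρ_h² + ω_h²) dy = 0 for all s. -/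
/-! Testing the `ρ`-equation with `ρ_h` and the `ω`-equation with `ω_h` (both lie in `V_h^k`)
gives `((ρ_h)_s, ρ_h) + ((ω_h)_s, ω_h) = -(u_h ω_h, ρ_h) + (ρ_h u_h, ω_h) = 0` on every cell.
Time differentiability is only assumed pointwise in `y`; it passes under the integral because
a polynomial of degree `≤ k` is determined by its values at `k + 1` nodes, so each cell integral
is a quadratic form in finitely many differentiable nodal values. -/

open MeasureTheory Polynomial
open scoped Classical

noncomputable section

def nodalBasis (k : ℕ) (i : Fin (k + 1)) : ℝ[X] :=
  Lagrange.basis Finset.univ (fun i : Fin (k + 1) => ((i : ℕ) : ℝ)) i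

lemma eval_eq_sum_nodalBasis {k : ℕ} {p : ℝ[X]} (hp : p.natDegree ≤ k) (y : ℝ) :
    p.eval y = ∑ i : Fin (k + 1), (nodalBasis k i).eval y * p.eval ((i : ℕ) : ℝ) := by
  have hinj : Set.InjOn (fun i : Fin (k + 1) => ((i : ℕ) : ℝ))
      (Finset.univ : Finset (Fin (k + 1))) :=
    (Nat.cast_injective.comp Fin.val_injective).injOn
  have hlt : p.degree < (Finset.univ : Finset (Fin (k + 1))).card := by
    rw [Finset.card_univ, Fintype.card_fin]
    exact p.degree_le_natDegree.trans_lt (by exact_mod_cast Nat.lt_succ_of_le hp)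
  conv_lhs => rw [Lagrange.eq_interpolate hinj hlt]
  rw [Lagrange.interpolate_apply, eval_finsetSum]
  exact Finset.sum_congr rfl fun i _ => by rw [eval_mul, eval_C, nodalBasis, mul_comm]

/-- `q` is the derivative of the nodal expansion of `p`, and derivatives are unique. -/
lemma eval_eq_sum_nodalBasis_of_hasDerivAt {k : ℕ} {p : ℝ → ℝ[X]} {q : ℝ[X]} {s : ℝ}
    (hp : ∀ τ, (p τ).natDegree ≤ k)
    (hq : ∀ y, HasDerivAt (fun τ => (p τ).eval y) (q.eval y) s) (y : ℝ) :
    q.eval y = ∑ i : Fin (k + 1), (nodalBasis k i).eval y * q.eval ((i : ℕ) : ℝ) := by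
  have hexp : (fun τ => (p τ).eval y)
      = fun τ => ∑ i : Fin (k + 1), (nodalBasis k i).eval y * (p τ).eval ((i : ℕ) : ℝ) :=
    funext fun τ => eval_eq_sum_nodalBasis (hp τ) y
  refine (hq y).unique ?_
  rw [hexp]
  exact HasDerivAt.fun_sum fun i _ => (hq _).const_mul _

lemma intervalIntegral_sum_mul_sum {m : ℕ} (a b : ℝ) (c c' : Fin m → ℝ)
    (g : Fin m → ℝ → ℝ) (hg : ∀ i, Continuous (g i)) :
    ∫ y in a..b, (∑ i, g i y * c i) * (∑ i, g i y * c' i)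
      = ∑ i, ∑ i', c i * c' i' * ∫ y in a..b, g i y * g i' y := by
  have hcont : ∀ i i', Continuous fun y => c i * c' i' * (g i y * g i' y) :=
    fun i i' => continuous_const.mul ((hg i).mul (hg i'))
  have hexpand : ∀ y, (∑ i, g i y * c i) * (∑ i, g i y * c' i)
      = ∑ i, ∑ i', c i * c' i' * (g i y * g i' y) := fun y => by
    rw [Finset.sum_mul_sum]
    exact Finset.sum_congr rfl fun i _ => Finset.sum_congr rfl fun i' _ => by ring
  simp_rw [hexpand]
  rw [intervalIntegral.integral_finsetSum fun i _ =>
    (continuous_finsetSum _ fun i' _ => hcont i i').intervalIntegrable _ _]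
  refine Finset.sum_congr rfl fun i _ => ?_
  rw [intervalIntegral.integral_finsetSum fun i' _ => (hcont i i').intervalIntegrable _ _]
  simp_rw [intervalIntegral.integral_const_mul]

lemma hasDerivAt_integral_eval_mul_eval {k : ℕ} (a b : ℝ) {p r : ℝ → ℝ[X]} {p' r' : ℝ[X]}
    {s : ℝ} (hp : ∀ τ, (p τ).natDegree ≤ k) (hr : ∀ τ, (r τ).natDegree ≤ k)
    (hp' : ∀ y, HasDerivAt (fun τ => (p τ).eval y) (p'.eval y) s)
    (hr' : ∀ y, HasDerivAt (fun τ => (r τ).eval y) (r'.eval y) s) :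
    HasDerivAt (fun τ => ∫ y in a..b, (p τ).eval y * (r τ).eval y)
      ((∫ y in a..b, p'.eval y * (r s).eval y) + ∫ y in a..b, (p s).eval y * r'.eval y) s := by
  set v : Fin (k + 1) → ℝ := fun i => ((i : ℕ) : ℝ)
  set G : Fin (k + 1) → Fin (k + 1) → ℝ :=
    fun i i' => ∫ y in a..b, (nodalBasis k i).eval y * (nodalBasis k i').eval y
  have hB : ∀ i, Continuous fun y => (nodalBasis k i).eval y :=
    fun i => (nodalBasis k i).continuous
  have hint : ∀ (P R : ℝ[X]),
      (∀ y, P.eval y = ∑ i, (nodalBasis k i).eval y * P.eval (v i)) →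
      (∀ y, R.eval y = ∑ i, (nodalBasis k i).eval y * R.eval (v i)) →
      ∫ y in a..b, P.eval y * R.eval y = ∑ i, ∑ i', P.eval (v i) * R.eval (v i') * G i i' :=
    fun P R hP hR => (intervalIntegral.integral_congr fun y _ => by
      rw [hP y, hR y]).trans (intervalIntegral_sum_mul_sum a b _ _ _ hB)
  have hquad : (fun τ => ∫ y in a..b, (p τ).eval y * (r τ).eval y)
      = fun τ => ∑ i, ∑ i', (p τ).eval (v i) * (r τ).eval (v i') * G i i' :=
    funext fun τ => hint _ _ (eval_eq_sum_nodalBasis (hp τ)) (eval_eq_sum_nodalBasis (hr τ))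
  rw [hquad,
    hint _ _ (eval_eq_sum_nodalBasis_of_hasDerivAt hp hp') (eval_eq_sum_nodalBasis (hr s)),
    hint _ _ (eval_eq_sum_nodalBasis (hp s)) (eval_eq_sum_nodalBasis_of_hasDerivAt hr hr'),
    ← Finset.sum_add_distrib]
  refine HasDerivAt.fun_sum fun i _ => ?_
  rw [← Finset.sum_add_distrib]
  refine HasDerivAt.fun_sum fun i' _ => ?_
  rw [← add_mul]
  exact ((hp' (v i)).mul (hr' (v i'))).mul_const _

lemma hasDerivAt_integral_sq_add_sq {k : ℕ} (a b : ℝ) {p r : ℝ → ℝ[X]} {p' r' : ℝ[X]}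
    {s : ℝ} (hp : ∀ τ, (p τ).natDegree ≤ k) (hr : ∀ τ, (r τ).natDegree ≤ k)
    (hp' : ∀ y, HasDerivAt (fun τ => (p τ).eval y) (p'.eval y) s)
    (hr' : ∀ y, HasDerivAt (fun τ => (r τ).eval y) (r'.eval y) s) :
    HasDerivAt (fun τ => ∫ y in a..b, (p τ).eval y ^ 2 + (r τ).eval y ^ 2)
      (2 * ((∫ y in a..b, p'.eval y * (p s).eval y) + ∫ y in a..b, r'.eval y * (r s).eval y))
      s := by
  have hsplit : (fun τ => ∫ y in a..b, (p τ).eval y ^ 2 + (r τ).eval y ^ 2)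
      = fun τ => (∫ y in a..b, (p τ).eval y * (p τ).eval y)
          + ∫ y in a..b, (r τ).eval y * (r τ).eval y := by
    funext τ
    simp_rw [sq]
    exact intervalIntegral.integral_add
      (((p τ).continuous.mul (p τ).continuous).intervalIntegrable _ _)
      (((r τ).continuous.mul (r τ).continuous).intervalIntegrable _ _)
  have hsymm : ∀ P Q : ℝ[X],
      ∫ y in a..b, P.eval y * Q.eval y = ∫ y in a..b, Q.eval y * P.eval y :=
    fun P Q => intervalIntegral.integral_congr fun y _ => mul_comm _ _
  rw [hsplit]
  refine ((hasDerivAt_integral_eval_mul_eval a b hp hp hp' hp').add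
    (hasDerivAt_integral_eval_mul_eval a b hr hr hr' hr')).congr_deriv ?_
  rw [hsymm (p s), hsymm (r s)]
  ring

theorem CD_DG_H1_conserved_general
    (N k : ℕ) (grid : Fin (N + 2) → ℝ)
    (ρ w u ρ' w' : ℝ → Fin (N + 1) → Polynomial ℝ)
    (hdeg : ∀ s j, (ρ s j).natDegree ≤ k ∧ (w s j).natDegree ≤ k ∧ (u s j).natDegree ≤ k)
    (hρ' : ∀ (s : ℝ) (j : Fin (N + 1)) (y : ℝ),
      HasDerivAt (fun τ => (ρ τ j).eval y) ((ρ' s j).eval y) s)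
    (hw' : ∀ (s : ℝ) (j : Fin (N + 1)) (y : ℝ),
      HasDerivAt (fun τ => (w τ j).eval y) ((w' s j).eval y) s)
    (scheme1 : ∀ (s : ℝ) (j : Fin (N + 1)) (φ : Polynomial ℝ), φ.natDegree ≤ k →
      cellInt grid j (fun y => (ρ' s j).eval y * φ.eval y)
        + cellInt grid j (fun y => (u s j).eval y * (w s j).eval y * φ.eval y) = 0)
    (scheme2 : ∀ (s : ℝ) (j : Fin (N + 1)) (φ : Polynomial ℝ), φ.natDegree ≤ k →
      cellInt grid j (fun y => (w' s j).eval y * φ.eval y)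
        = cellInt grid j (fun y => (ρ s j).eval y * (u s j).eval y * φ.eval y))
    (s : ℝ) :
    HasDerivAt
      (fun τ => ∑ j, cellInt grid j (fun y => ((ρ τ j).eval y) ^ 2 + ((w τ j).eval y) ^ 2))
      0 s := by
  have hcell : ∀ j, HasDerivAt
      (fun τ => cellInt grid j (fun y => ((ρ τ j).eval y) ^ 2 + ((w τ j).eval y) ^ 2)) 0 s := by
    intro j
    have hρ := scheme1 s j (ρ s j) (hdeg s j).1
    have hw := scheme2 s j (w s j) (hdeg s j).2.1
    have hsource : cellInt grid j (fun y => (ρ s j).eval y * (u s j).eval y * (w s j).eval y)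
        = cellInt grid j (fun y => (u s j).eval y * (w s j).eval y * (ρ s j).eval y) :=
      intervalIntegral.integral_congr fun y _ => by ring
    have hbalance : cellInt grid j (fun y => (ρ' s j).eval y * (ρ s j).eval y)
        + cellInt grid j (fun y => (w' s j).eval y * (w s j).eval y) = 0 := by
      linarith
    have henergy := hasDerivAt_integral_sq_add_sq (lep grid j) (rep grid j)
      (fun τ => (hdeg τ j).1) (fun τ => (hdeg τ j).2.1) (hρ' s j) (hw' s j)
    rw [cellInt, cellInt] at hbalance
    rwa [hbalance, mul_zero] at henergy
  simpa using HasDerivAt.fun_sum fun j _ => hcell j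

/-- **`H₁`-conservation of the semi-discrete DG scheme for the coupled dispersionless system
written as `ρ_s + uω = 0`, `ω_s = ρu`, `ω = u_y`**, with the upwind numerical flux
`û = u⁺`. The discrete quantity `H₁(ρ_h, ω_h) = ∫_I (ρ_h² + ω_h²) dy` satisfies
`d/ds H₁ = 0` for all `s`. -/
theorem CD_DG_H1_conserved
    (N k : ℕ) (grid : Fin (N + 2) → ℝ) (hgrid : StrictMono grid)
    (ρ w u ρ' w' : ℝ → Fin (N + 1) → Polynomial ℝ)
    (hdeg : ∀ s j, (ρ s j).natDegree ≤ k ∧ (w s j).natDegree ≤ k ∧ (u s j).natDegree ≤ k)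
    (hρ' : ∀ (s : ℝ) (j : Fin (N + 1)) (y : ℝ),
      HasDerivAt (fun τ => (ρ τ j).eval y) ((ρ' s j).eval y) s)
    (hw' : ∀ (s : ℝ) (j : Fin (N + 1)) (y : ℝ),
      HasDerivAt (fun τ => (w τ j).eval y) ((w' s j).eval y) s)
    (scheme1 : ∀ (s : ℝ) (j : Fin (N + 1)) (φ : Polynomial ℝ), φ.natDegree ≤ k →
      cellInt grid j (fun y => (ρ' s j).eval y * φ.eval y)
        + cellInt grid j (fun y => (u s j).eval y * (w s j).eval y * φ.eval y) = 0)
    (scheme2 : ∀ (s : ℝ) (j : Fin (N + 1)) (φ : Polynomial ℝ), φ.natDegree ≤ k →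
      cellInt grid j (fun y => (w' s j).eval y * φ.eval y)
        = cellInt grid j (fun y => (ρ s j).eval y * (u s j).eval y * φ.eval y))
    (scheme3 : ∀ (s : ℝ) (j : Fin (N + 1)) (ψ : Polynomial ℝ), ψ.natDegree ≤ k →
      cellInt grid j (fun y => (w s j).eval y * ψ.eval y)
        = brk grid (trP grid (u s)) ψ j
          - cellInt grid j (fun y => (u s j).eval y * ψ.derivative.eval y))
    (s : ℝ) :
    HasDerivAt
      (fun τ => ∑ j, cellInt grid j (fun y => ((ρ τ j).eval y) ^ 2 + ((w τ j).eval y) ^ 2))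
      0 s :=
  CD_DG_H1_conserved_general N k grid ρ w u ρ' w' hdeg hρ' hw' scheme1 scheme2 s

end
end

section
/- Let u be a smooth function on I = [y_L, y_R] with ω = u_y, and let u_h, ω_h ∈ V_h^k satisfy the error equation (ω − ω_h, ψ)_{I_j} = ⟨u − û_h, ψ⟩_{I_j} − (u − u_h, ψ_y)_{I_j} for every cell I_j and every ψ ∈ V_h^k, where the flux is û_h = u_h⁺, so that, u being continuous, the interface value of u − u_h is u − u_h⁺. Define ξ^u = P⁺u − u_h, ξ^ω = Pω − ω_h, η^ω = ω − Pω. Then there exists a positive constant C_{σ,p}, independent of the mesh size h and depending only on the inverse inequality constant σ and the Poincaré constant C_p, such that ‖ξ^u‖_{L²(I)} ≤ C_{σ,p}(‖ξ^ω‖_{L²(I)} + ‖η^ω‖_{L²(I)}). -/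
open MeasureTheory Polynomial
open scoped Classical

noncomputable section

/-- The upwind interface value `û_h = u_h⁺` at the right interface `y_{j+1/2}` of cell `j`:
the trace from the right cell `I_{j+1}` at interior interfaces, and the exact Dirichlet
boundary value `u(y_R)` at the right boundary. -/
def upwindHat {N : ℕ} (grid : Fin (N + 2) → ℝ) (uh : Fin (N + 1) → Polynomial ℝ)
    (uR : ℝ) (j : Fin (N + 1)) : ℝ :=
  if h : (j : ℕ) < N then (uh ⟨(j : ℕ) + 1, by omega⟩).eval (rep grid j) else uR



/-- integral of a polynomial over an interval -/
def Jint (l r : ℝ) (p : Polynomial ℝ) : ℝ := ∫ y in l..r, p.eval y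

lemma pII (p : Polynomial ℝ) (l r : ℝ) :
    IntervalIntegrable (fun y => p.eval y) volume l r :=
  p.continuous_aeval.intervalIntegrable l r

lemma Jint_add (l r : ℝ) (p q : Polynomial ℝ) :
    Jint l r (p + q) = Jint l r p + Jint l r q := by
  unfold Jint
  simp only [eval_add]
  exact intervalIntegral.integral_add (pII p l r) (pII q l r)

lemma Jint_sub (l r : ℝ) (p q : Polynomial ℝ) :
    Jint l r (p - q) = Jint l r p - Jint l r q := by
  unfold Jint
  simp only [eval_sub]
  exact intervalIntegral.integral_sub (pII p l r) (pII q l r)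

lemma Jint_zero (l r : ℝ) : Jint l r 0 = 0 := by
  unfold Jint; simp

lemma Jint_neg (l r : ℝ) (p : Polynomial ℝ) : Jint l r (-p) = - Jint l r p := by
  have := Jint_sub l r 0 p
  simpa [Jint_zero] using this

lemma Jint_Cmul (l r : ℝ) (c : ℝ) (p : Polynomial ℝ) :
    Jint l r (C c * p) = c * Jint l r p := by
  unfold Jint
  simp only [eval_mul, eval_C]
  exact intervalIntegral.integral_const_mul c _

lemma Jint_two_mul (l r : ℝ) (p : Polynomial ℝ) :
    Jint l r (2 * p) = 2 * Jint l r p := by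
  unfold Jint
  simp only [eval_mul, eval_ofNat]
  exact intervalIntegral.integral_const_mul 2 _

lemma Jint_const (l r : ℝ) (c : ℝ) : Jint l r (C c) = (r - l) * c := by
  unfold Jint
  simp [intervalIntegral.integral_const, smul_eq_mul]

lemma Jint_ftc (l r : ℝ) (p : Polynomial ℝ) :
    Jint l r (derivative p) = p.eval r - p.eval l := by
  unfold Jint
  have hd : (deriv fun y => p.eval y) = fun y => (derivative p).eval y :=
    funext fun y => p.deriv
  have h := intervalIntegral.integral_deriv_eq_sub
    (f := fun y => p.eval y) (a := l) (b := r)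
    (fun x _ => p.differentiableAt) (by rw [hd]; exact pII _ l r)
  rw [hd] at h
  exact h

lemma Jint_nonneg {l r : ℝ} (hlr : l ≤ r) (p : Polynomial ℝ)
    (h : ∀ y ∈ Set.Icc l r, 0 ≤ p.eval y) : 0 ≤ Jint l r p :=
  intervalIntegral.integral_nonneg hlr h

lemma Jint_mono {l r : ℝ} (hlr : l ≤ r) (p q : Polynomial ℝ)
    (h : ∀ y ∈ Set.Icc l r, p.eval y ≤ q.eval y) : Jint l r p ≤ Jint l r q :=
  intervalIntegral.integral_mono_on hlr (pII p l r) (pII q l r) h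

lemma Jint_sq_nonneg {l r : ℝ} (hlr : l ≤ r) (p : Polynomial ℝ) :
    0 ≤ Jint l r (p ^ 2) :=
  Jint_nonneg hlr _ (fun y _ => by simp only [eval_pow]; positivity)

/-- Cauchy–Schwarz for interval integrals of continuous functions. -/
lemma intCS {l r : ℝ} (hlr : l ≤ r) (f g : ℝ → ℝ) (hf : Continuous f)
    (hg : Continuous g) :
    (∫ y in l..r, f y * g y) ^ 2 ≤ (∫ y in l..r, f y ^ 2) * (∫ y in l..r, g y ^ 2) := by
  set A := ∫ y in l..r, f y ^ 2 with hA
  set Cc := ∫ y in l..r, f y * g y with hC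
  set B := ∫ y in l..r, g y ^ 2 with hB
  have key : ∀ t : ℝ, 0 ≤ A * (t * t) + (2 * Cc) * t + B := by
    intro t
    have h0 : 0 ≤ ∫ y in l..r, (t * f y + g y) ^ 2 :=
      intervalIntegral.integral_nonneg hlr (fun y _ => sq_nonneg _)
    have i1 : IntervalIntegrable (fun y => (t * t) * f y ^ 2) volume l r :=
      (continuous_const.mul (hf.pow 2)).intervalIntegrable l r
    have i2 : IntervalIntegrable (fun y => (2 * t) * (f y * g y)) volume l r :=
      (continuous_const.mul (hf.mul hg)).intervalIntegrable l r
    have i3 : IntervalIntegrable (fun y => g y ^ 2) volume l r :=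
      (hg.pow 2).intervalIntegrable l r
    have hexp : (∫ y in l..r, (t * f y + g y) ^ 2)
        = (t * t) * A + (2 * t) * Cc + B := by
      have hfun : (fun y => (t * f y + g y) ^ 2)
          = fun y => ((t * t) * f y ^ 2 + (2 * t) * (f y * g y)) + g y ^ 2 := by
        funext y; ring
      rw [hfun, intervalIntegral.integral_add (i1.add i2) i3,
        intervalIntegral.integral_add i1 i2,
        intervalIntegral.integral_const_mul, intervalIntegral.integral_const_mul]
    rw [hexp] at h0
    linarith [h0]
  have hd := discrim_le_zero key
  unfold discrim at hd
  nlinarith [hd]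

/-- Cauchy–Schwarz in `Jint` form. -/
lemma Jint_CS {l r : ℝ} (hlr : l ≤ r) (p q : Polynomial ℝ) :
    (Jint l r (p * q)) ^ 2 ≤ Jint l r (p ^ 2) * Jint l r (q ^ 2) := by
  have h := intCS hlr (fun y => p.eval y) (fun y => q.eval y)
    p.continuous_aeval q.continuous_aeval
  unfold Jint
  simpa only [eval_mul, eval_pow] using h



set_option maxHeartbeats 2000000 in
/-- Per-cell stability lemma. -/
lemma cellLemma (k : ℕ) (l r : ℝ) (hlr : l < r) (G e : Polynomial ℝ) (B : ℝ)
    (he : e.natDegree ≤ k)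
    (hM : ∀ ψ : Polynomial ℝ, ψ.natDegree ≤ k →
      Jint l r (G * ψ) = B * ψ.eval r - e.eval l * ψ.eval l
        - Jint l r (e * derivative ψ)) :
    e.eval l = B - Jint l r G ∧
    Jint l r (e ^ 2) ≤ 2 * (r - l) * (e.eval l) ^ 2 + 8 * (r - l) ^ 2 * Jint l r (G ^ 2) := by
  have hlr' : l ≤ r := hlr.le
  -- Part 1 : test with ψ = 1
  have part1 : e.eval l = B - Jint l r G := by
    have h1 := hM 1 (by simp)
    simp only [mul_one, eval_one, derivative_one, mul_zero, Jint_zero] at h1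
    linarith [h1]
  refine ⟨part1, ?_⟩
  obtain ⟨f, hf⟩ : ∃ p : Polynomial ℝ, p = derivative e := ⟨_, rfl⟩
  obtain ⟨E, hEdef⟩ : ∃ p : Polynomial ℝ, p = e - C (e.eval l) := ⟨_, rfl⟩
  obtain ⟨w, hw⟩ : ∃ p : Polynomial ℝ, p = C r - X := ⟨_, rfl⟩
  have hE : derivative E = f := by
    rw [hEdef, hf, derivative_sub, derivative_C, sub_zero]
  have hEl : E.eval l = 0 := by simp [hEdef]
  -- integration by parts
  have IBP : ∀ ψ : Polynomial ℝ, Jint l r (e * derivative ψ)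
      = (e * ψ).eval r - (e * ψ).eval l - Jint l r (f * ψ) := by
    intro ψ
    have h1 := Jint_ftc l r (e * ψ)
    rw [derivative_mul, Jint_add, ← hf] at h1
    linarith [h1]
  -- orthogonality: Jint (G * (f * w)) = Jint (f * (f * w))
  have horto : Jint l r (G * (f * w)) = Jint l r (f * (f * w)) := by
    by_cases hf0 : f = 0
    · rw [hf0]; simp only [zero_mul, mul_zero, Jint_zero]
    · have hdeg : ((X - C r) * f).natDegree ≤ k := by
        have h1 : f.natDegree ≤ e.natDegree - 1 := hf ▸ natDegree_derivative_le e
        have h2 : e.natDegree ≠ 0 := by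
          intro h
          apply hf0
          rw [hf, eq_C_of_natDegree_eq_zero h, derivative_C]
        calc ((X - C r) * f).natDegree ≤ (X - C r).natDegree + f.natDegree :=
              natDegree_mul_le
          _ ≤ 1 + (e.natDegree - 1) := add_le_add (natDegree_X_sub_C_le r) h1
          _ ≤ e.natDegree := by omega
          _ ≤ k := he
      have h1 := hM ((X - C r) * f) hdeg
      have h2 := IBP ((X - C r) * f)
      have hevr : ((X - C r) * f).eval r = 0 := by simp
      have hevr2 : (e * ((X - C r) * f)).eval r = 0 := by simp
      have hevl2 : (e * ((X - C r) * f)).eval l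
          = e.eval l * (((X - C r) * f).eval l) := by simp [eval_mul]
      rw [hevr, mul_zero] at h1
      rw [hevr2, hevl2] at h2
      have h3 : Jint l r (G * ((X - C r) * f)) = Jint l r (f * ((X - C r) * f)) := by
        linarith [h1, h2]
      have e1 : G * ((X - C r) * f) = -(G * (f * w)) := by rw [hw]; ring
      have e2 : f * ((X - C r) * f) = -(f * (f * w)) := by rw [hw]; ring
      rw [e1, e2, Jint_neg, Jint_neg] at h3
      linarith [h3]
  -- weight is nonneg on [l, r]
  have hwnn : ∀ y ∈ Set.Icc l r, (0:ℝ) ≤ w.eval y := by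
    intro y hy
    simp only [hw, eval_sub, eval_C, eval_X]
    linarith [hy.2]
  have hwle : ∀ y ∈ Set.Icc l r, w.eval y ≤ r - l := by
    intro y hy
    simp only [hw, eval_sub, eval_C, eval_X]
    linarith [hy.1]
  -- V ≤ W
  have hVW : Jint l r (f ^ 2 * w) ≤ Jint l r (G ^ 2 * w) := by
    have h0 : 0 ≤ Jint l r ((G - f) ^ 2 * w) := by
      apply Jint_nonneg hlr'
      intro y hy
      simp only [eval_mul, eval_pow]
      exact mul_nonneg (sq_nonneg _) (hwnn y hy)
    have hexp : (G - f) ^ 2 * w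
        = (G ^ 2 * w - (G * (f * w) + G * (f * w))) + f ^ 2 * w := by ring
    rw [hexp, Jint_add, Jint_sub, Jint_add, horto] at h0
    have hfe : f * (f * w) = f ^ 2 * w := by ring
    rw [hfe] at h0
    linarith [h0]
  -- W ≤ (r - l) * SG
  have hW : Jint l r (G ^ 2 * w) ≤ (r - l) * Jint l r (G ^ 2) := by
    have hmono : Jint l r (G ^ 2 * w) ≤ Jint l r (C (r - l) * G ^ 2) := by
      apply Jint_mono hlr'
      intro y hy
      simp only [eval_mul, eval_pow, eval_C]
      have h1 := hwnn y hy
      have h2 := hwle y hy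
      nlinarith [sq_nonneg (G.eval y)]
    rwa [Jint_Cmul] at hmono
  -- X' identity
  have hXid : Jint l r (E ^ 2) = 2 * Jint l r (E * (f * w)) := by
    have hQ : derivative ((X - C r) * E ^ 2) = E ^ 2 - 2 * (E * (f * w)) := by
      have h2 : derivative (E ^ 2) = 2 * (E * f) := by
        rw [sq, derivative_mul, hE]; ring
      rw [derivative_mul, h2, derivative_sub, derivative_X, derivative_C, hw]
      ring
    have h1 := Jint_ftc l r ((X - C r) * E ^ 2)
    rw [hQ, Jint_sub, Jint_two_mul] at h1
    have hr0 : ((X - C r) * E ^ 2).eval r = 0 := by simp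
    have hl0 : ((X - C r) * E ^ 2).eval l = 0 := by simp [hEl]
    rw [hr0, hl0] at h1
    linarith [h1]
  have hX0 : 0 ≤ Jint l r (E ^ 2) := Jint_sq_nonneg hlr' E
  have hSG0 : 0 ≤ Jint l r (G ^ 2) := Jint_sq_nonneg hlr' G
  have hV0 : 0 ≤ Jint l r (f ^ 2 * w) := by
    apply Jint_nonneg hlr'
    intro y hy
    simp only [eval_mul, eval_pow]
    exact mul_nonneg (sq_nonneg _) (hwnn y hy)
  -- CS step
  have hCS : (Jint l r (E * (f * w))) ^ 2 ≤ Jint l r (E ^ 2) * Jint l r ((f * w) ^ 2) :=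
    Jint_CS hlr' E (f * w)
  -- (f*w)^2 ≤ (r-l) * f^2 * w  (pointwise)
  have hA2 : Jint l r ((f * w) ^ 2) ≤ (r - l) * Jint l r (f ^ 2 * w) := by
    have hmono : Jint l r ((f * w) ^ 2) ≤ Jint l r (C (r - l) * (f ^ 2 * w)) := by
      apply Jint_mono hlr'
      intro y hy
      simp only [eval_mul, eval_pow, eval_C]
      have h1 := hwnn y hy
      have h2 := hwle y hy
      nlinarith [sq_nonneg (f.eval y), mul_nonneg (sq_nonneg (f.eval y)) h1]
    rwa [Jint_Cmul] at hmono
  -- conclude X' ≤ 4 (r-l)^2 SG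
  have hchain : Jint l r ((f * w) ^ 2) ≤ (r - l) ^ 2 * Jint l r (G ^ 2) := by
    calc Jint l r ((f * w) ^ 2) ≤ (r - l) * Jint l r (f ^ 2 * w) := hA2
      _ ≤ (r - l) * Jint l r (G ^ 2 * w) := by nlinarith [hVW]
      _ ≤ (r - l) * ((r - l) * Jint l r (G ^ 2)) := by nlinarith [hW]
      _ = (r - l) ^ 2 * Jint l r (G ^ 2) := by ring
  have hXbound : Jint l r (E ^ 2) ≤ 4 * (r - l) ^ 2 * Jint l r (G ^ 2) := by
    rcases eq_or_lt_of_le hX0 with h0 | h0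
    · rw [← h0]; positivity
    · have hsq : (Jint l r (E ^ 2)) ^ 2
          ≤ 4 * Jint l r (E ^ 2) * ((r - l) ^ 2 * Jint l r (G ^ 2)) := by
        have h4 : (Jint l r (E ^ 2)) ^ 2 = 4 * (Jint l r (E * (f * w))) ^ 2 := by
          rw [hXid]; ring
        rw [h4]
        nlinarith [hCS, hchain, hX0]
      nlinarith [hsq, h0]
  -- final pointwise bound e^2 ≤ 2E^2 + 2c^2
  have hfinal : Jint l r (e ^ 2)
      ≤ 2 * Jint l r (E ^ 2) + (r - l) * (2 * (e.eval l) ^ 2) := by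
    have hmono : Jint l r (e ^ 2) ≤ Jint l r (2 * E ^ 2 + C (2 * (e.eval l) ^ 2)) := by
      apply Jint_mono hlr'
      intro y hy
      have hy2 : e.eval y = E.eval y + e.eval l := by
        rw [hEdef]; simp [eval_sub, eval_C]
      simp only [eval_add, eval_mul, eval_pow, eval_C, eval_ofNat, hy2]
      nlinarith [sq_nonneg (E.eval y - e.eval l)]
    rw [Jint_add, Jint_two_mul, Jint_const] at hmono
    linarith [hmono]
  calc Jint l r (e ^ 2) ≤ 2 * Jint l r (E ^ 2) + (r - l) * (2 * (e.eval l) ^ 2) := hfinal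
    _ ≤ 2 * (4 * (r - l) ^ 2 * Jint l r (G ^ 2)) + (r - l) * (2 * (e.eval l) ^ 2) := by
        linarith [hXbound]
    _ = 2 * (r - l) * (e.eval l) ^ 2 + 8 * (r - l) ^ 2 * Jint l r (G ^ 2) := by ring


set_option maxHeartbeats 0 in
/-- **Lemma 3.1: `‖ξ^u‖ ≤ C(‖ξ^ω‖ + ‖η^ω‖)` for the `H₁`-conserved DG scheme.**
Let `u` be smooth on `I = [y_L, y_R]` with `ω = u_y`, and let `u_h, ω_h ∈ V_h^k` satisfy the
error equation `(ω - ω_h, ψ)_{I_j} = ⟨û - û_h, ψ⟩_{I_j} - (u - u_h, ψ_y)_{I_j}` with the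
upwind flux `û_h = u_h⁺` (and `u` continuous). With `ξ^u = P⁺u - u_h`, `ξ^ω = Pω - ω_h`,
`η^ω = ω - Pω`, there is a constant `C`, depending only on the polynomial degree `k`, the
domain, and the mesh-regularity constant `δ` (through the inverse and Poincaré constants)
but independent of the mesh size `h`, with
`‖ξ^u‖_{L²(I)} ≤ C (‖ξ^ω‖_{L²(I)} + ‖η^ω‖_{L²(I)})`. -/
theorem DG_xi_u_bound
    (k : ℕ) (yL yR : ℝ) (hI : yL < yR) (δ : ℝ) (hδ : 0 < δ) :
    ∃ C : ℝ, 0 < C ∧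
      ∀ (N : ℕ) (grid : Fin (N + 2) → ℝ) (hm : ℝ),
        StrictMono grid → grid 0 = yL → grid (Fin.last (N + 1)) = yR →
        (∀ j : Fin (N + 1),
          rep grid j - lep grid j ≤ hm ∧ hm ≤ δ * (rep grid j - lep grid j)) →
        ∀ u : ℝ → ℝ, ContDiff ℝ (⊤ : ℕ∞) u →
        ∀ uh wh Pu Pw : Fin (N + 1) → Polynomial ℝ,
        (∀ j, (uh j).natDegree ≤ k ∧ (wh j).natDegree ≤ k ∧
          (Pu j).natDegree ≤ k ∧ (Pw j).natDegree ≤ k) →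
        -- `Pw` is the `L²` projection of `ω = u_y` into `V_h^k`
        (∀ (j : Fin (N + 1)) (φ : Polynomial ℝ), φ.natDegree ≤ k →
          cellInt grid j (fun y => (deriv u y - (Pw j).eval y) * φ.eval y) = 0) →
        -- `Pu` is the Gauss–Radau projection `P⁺u` into `V_h^k`
        (∀ (j : Fin (N + 1)) (φ : Polynomial ℝ), φ.degree < (k : WithBot ℕ) →
          cellInt grid j (fun y => (u y - (Pu j).eval y) * φ.eval y) = 0) →
        (∀ j : Fin (N + 1), (Pu j).eval (lep grid j) = u (lep grid j)) →
        -- the error equation with the upwind flux `û_h = u_h⁺`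
        (∀ (j : Fin (N + 1)) (ψ : Polynomial ℝ), ψ.natDegree ≤ k →
          cellInt grid j (fun y => (deriv u y - (wh j).eval y) * ψ.eval y)
            = (u (rep grid j) - upwindHat grid uh (u yR) j) * ψ.eval (rep grid j)
              - (u (lep grid j) - (uh j).eval (lep grid j)) * ψ.eval (lep grid j)
              - cellInt grid j (fun y => (u y - (uh j).eval y) * ψ.derivative.eval y)) →
        Real.sqrt (∑ j, cellInt grid j (fun y => ((Pu j).eval y - (uh j).eval y) ^ 2))
          ≤ C * (Real.sqrt (∑ j, cellInt grid j
                  (fun y => ((Pw j).eval y - (wh j).eval y) ^ 2))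
               + Real.sqrt (∑ j, cellInt grid j
                  (fun y => (deriv u y - (Pw j).eval y) ^ 2))) := by
  refine ⟨4 * (yR - yL) + 1, by linarith, ?_⟩
  intro N grid hm hmono hgL hgR hmesh u hu uh wh Pu Pw hdeg hProjW hGR hGRpt hErr
  clear hmesh hδ
  have hlr : ∀ j : Fin (N + 1), lep grid j < rep grid j :=
    fun j => hmono (Fin.castSucc_lt_succ (i := j))
  obtain ⟨L, hLdef⟩ : ∃ L : ℝ, L = yR - yL := ⟨_, rfl⟩
  have hL0 : 0 < L := by rw [hLdef]; linarith
  -- telescoping: cell lengths sum to L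
  obtain ⟨g, hgdef⟩ : ∃ g : ℕ → ℝ,
      g = fun i => if h : i ≤ N + 1 then grid ⟨i, Nat.lt_succ_of_le h⟩ else 0 := ⟨_, rfl⟩
  have hgval : ∀ (i : ℕ) (h : i ≤ N + 1), g i = grid ⟨i, Nat.lt_succ_of_le h⟩ := by
    intro i h; rw [hgdef]; exact dif_pos h
  have hsumh : ∑ j : Fin (N + 1), (rep grid j - lep grid j) = L := by
    have h1 : ∑ j : Fin (N + 1), (rep grid j - lep grid j)
        = ∑ i ∈ Finset.range (N + 1), (g (i + 1) - g i) := by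
      rw [← Fin.sum_univ_eq_sum_range (fun i => g (i + 1) - g i) (N + 1)]
      apply Finset.sum_congr rfl
      intro j _
      have e1 : g ((j : ℕ) + 1) = grid j.succ := by
        rw [hgval ((j : ℕ) + 1) (by omega)]
        exact congrArg grid (Fin.ext (by simp [Fin.val_succ]))
      have e2 : g (j : ℕ) = grid j.castSucc := by
        rw [hgval (j : ℕ) (by omega)]
        exact congrArg grid (Fin.ext (by simp [Fin.coe_castSucc]))
      rw [e1, e2]
      rfl
    rw [h1, Finset.sum_range_sub g (N + 1)]
    have hgN : g (N + 1) = yR := by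
      rw [hgval (N + 1) le_rfl, ← hgR]
      exact congrArg grid (Fin.ext (by simp [Fin.val_last]))
    have hg0 : g 0 = yL := by
      rw [hgval 0 (by omega), ← hgL]
      exact congrArg grid (Fin.ext (by simp [Fin.val_zero]))
    rw [hgN, hg0, hLdef]
  have hjle : ∀ j : Fin (N + 1), rep grid j - lep grid j ≤ L := by
    intro j
    have h1 : grid j.succ ≤ grid (Fin.last (N + 1)) := hmono.monotone (Fin.le_last _)
    have h2 : grid 0 ≤ grid j.castSucc := hmono.monotone (Fin.zero_le _)
    rw [hLdef, ← hgR, ← hgL]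
    unfold rep lep
    linarith
  have hjpos : ∀ j : Fin (N + 1), 0 < rep grid j - lep grid j :=
    fun j => by linarith [hlr j]
  -- Bf : the interface value
  obtain ⟨Bf, hBf⟩ : ∃ Bf : Fin (N + 1) → ℝ, Bf = fun j : Fin (N + 1) =>
      if h : (j : ℕ) < N then
        (Pu ⟨(j : ℕ) + 1, by omega⟩ - uh ⟨(j : ℕ) + 1, by omega⟩).eval (rep grid j)
      else 0 := ⟨_, rfl⟩
  have hBfpos : ∀ (j : Fin (N + 1)) (h : (j : ℕ) < N), Bf j
      = (Pu ⟨(j : ℕ) + 1, by omega⟩ - uh ⟨(j : ℕ) + 1, by omega⟩).eval (rep grid j) := by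
    intro j h; rw [hBf]; exact dif_pos h
  have hBfneg : ∀ (j : Fin (N + 1)), ¬((j : ℕ) < N) → Bf j = 0 := by
    intro j h; rw [hBf]; exact dif_neg h
  have hBfpos' : ∀ (j j' : Fin (N + 1)), (j : ℕ) < N → ((j' : ℕ) = (j : ℕ) + 1) →
      Bf j = (Pu j' - uh j').eval (rep grid j) := by
    intro j j' h hj'
    rw [hBfpos j h]
    have hjj : (⟨(j : ℕ) + 1, by omega⟩ : Fin (N + 1)) = j' := by
      apply Fin.ext
      show (j : ℕ) + 1 = (j' : ℕ)
      omega
    rw [hjj]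
  have hadj : ∀ (j j' : Fin (N + 1)), ((j' : ℕ) = (j : ℕ) + 1) →
      rep grid j = lep grid j' := by
    intro j j' hj'
    unfold rep lep
    apply congrArg grid
    apply Fin.ext
    simp only [Fin.val_succ, Fin.coe_castSucc]
    omega
  -- flux identity
  have hflux : ∀ j : Fin (N + 1), u (rep grid j) - upwindHat grid uh (u yR) j = Bf j := by
    intro j
    by_cases hj : (j : ℕ) < N
    · rw [hBfpos j hj]
      unfold upwindHat
      rw [dif_pos hj]
      have hpt := hGRpt ⟨(j : ℕ) + 1, by omega⟩
      have hle : lep grid ⟨(j : ℕ) + 1, by omega⟩ = rep grid j := by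
        unfold lep rep
        exact congrArg grid (Fin.ext (by simp [Fin.coe_castSucc, Fin.val_succ]))
      rw [hle] at hpt
      rw [eval_sub, hpt]
    · rw [hBfneg j hj]
      unfold upwindHat
      rw [dif_neg hj]
      have hrep : rep grid j = yR := by
        unfold rep
        rw [← hgR]
        have h2 := j.isLt
        exact congrArg grid (Fin.ext (by simp only [Fin.val_succ, Fin.val_last]; omega))
      rw [hrep]
      ring
  -- degree of derivative
  have hdegD : ∀ ψ : Polynomial ℝ, ψ.natDegree ≤ k →
      (derivative ψ).degree < (k : WithBot ℕ) := by
    intro ψ hψ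
    by_cases h0 : derivative ψ = 0
    · rw [h0, degree_zero]
      exact WithBot.bot_lt_coe k
    · have h1 : ψ.natDegree ≠ 0 := by
        intro hz
        apply h0
        rw [eq_C_of_natDegree_eq_zero hz]
        simp
      have h2 : (derivative ψ).natDegree < k :=
        lt_of_le_of_lt (natDegree_derivative_le ψ) (by omega)
      rw [degree_eq_natDegree h0]
      exact_mod_cast h2
  -- continuity
  have hcu : Continuous u := hu.continuous
  have hcdu : Continuous (deriv u) := hu.continuous_deriv (by simp)
  -- master identity
  have hMall : ∀ (j : Fin (N + 1)) (ψ : Polynomial ℝ), ψ.natDegree ≤ k →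
      Jint (lep grid j) (rep grid j) ((Pw j - wh j) * ψ)
        = Bf j * ψ.eval (rep grid j)
          - (Pu j - uh j).eval (lep grid j) * ψ.eval (lep grid j)
          - Jint (lep grid j) (rep grid j) ((Pu j - uh j) * derivative ψ) := by
    intro j ψ hψ
    have h1 := hErr j ψ hψ
    have h2 := hProjW j ψ hψ
    have h3 := hGR j (derivative ψ) (hdegD ψ hψ)
    have i1 : IntervalIntegrable (fun y => (deriv u y - (wh j).eval y) * ψ.eval y)
        volume (lep grid j) (rep grid j) :=
      ((hcdu.sub (wh j).continuous_aeval).mul ψ.continuous_aeval).intervalIntegrable _ _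
    have i2 : IntervalIntegrable (fun y => (deriv u y - (Pw j).eval y) * ψ.eval y)
        volume (lep grid j) (rep grid j) :=
      ((hcdu.sub (Pw j).continuous_aeval).mul ψ.continuous_aeval).intervalIntegrable _ _
    have i3 : IntervalIntegrable
        (fun y => (u y - (uh j).eval y) * (derivative ψ).eval y)
        volume (lep grid j) (rep grid j) :=
      ((hcu.sub (uh j).continuous_aeval).mul
        (derivative ψ).continuous_aeval).intervalIntegrable _ _
    have i4 : IntervalIntegrable
        (fun y => (u y - (Pu j).eval y) * (derivative ψ).eval y)
        volume (lep grid j) (rep grid j) :=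
      ((hcu.sub (Pu j).continuous_aeval).mul
        (derivative ψ).continuous_aeval).intervalIntegrable _ _
    have hLHS : Jint (lep grid j) (rep grid j) ((Pw j - wh j) * ψ)
        = cellInt grid j (fun y => (deriv u y - (wh j).eval y) * ψ.eval y)
          - cellInt grid j (fun y => (deriv u y - (Pw j).eval y) * ψ.eval y) := by
      unfold Jint cellInt
      rw [← intervalIntegral.integral_sub i1 i2]
      apply intervalIntegral.integral_congr
      intro y _
      simp only [eval_mul, eval_sub]
      ring
    have hRHS : Jint (lep grid j) (rep grid j) ((Pu j - uh j) * derivative ψ)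
        = cellInt grid j (fun y => (u y - (uh j).eval y) * (derivative ψ).eval y)
          - cellInt grid j (fun y => (u y - (Pu j).eval y) * (derivative ψ).eval y) := by
      unfold Jint cellInt
      rw [← intervalIntegral.integral_sub i3 i4]
      apply intervalIntegral.integral_congr
      intro y _
      simp only [eval_mul, eval_sub]
      ring
    have hl : u (lep grid j) - (uh j).eval (lep grid j)
        = (Pu j - uh j).eval (lep grid j) := by
      rw [eval_sub, hGRpt j]
    rw [hLHS, h2, sub_zero, h1, hflux j, hl, hRHS, h3, sub_zero]
  -- per-cell conclusions
  have hedeg : ∀ j, (Pu j - uh j).natDegree ≤ k := fun j =>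
    le_trans (natDegree_sub_le _ _) (max_le (hdeg j).2.2.1 (hdeg j).1)
  have fact1 : ∀ j : Fin (N + 1), (Pu j - uh j).eval (lep grid j)
      = Bf j - Jint (lep grid j) (rep grid j) (Pw j - wh j) :=
    fun j => (cellLemma k (lep grid j) (rep grid j) (hlr j) (Pw j - wh j)
      (Pu j - uh j) (Bf j) (hedeg j) (hMall j)).1
  have fact2 : ∀ j : Fin (N + 1),
      Jint (lep grid j) (rep grid j) ((Pu j - uh j) ^ 2)
        ≤ 2 * (rep grid j - lep grid j) * ((Pu j - uh j).eval (lep grid j)) ^ 2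
          + 8 * (rep grid j - lep grid j) ^ 2
            * Jint (lep grid j) (rep grid j) ((Pw j - wh j) ^ 2) :=
    fun j => (cellLemma k (lep grid j) (rep grid j) (hlr j) (Pw j - wh j)
      (Pu j - uh j) (Bf j) (hedeg j) (hMall j)).2
  -- T j
  obtain ⟨T, hT⟩ : ∃ T : Fin (N + 1) → ℝ,
      T = fun j => Jint (lep grid j) (rep grid j) (Pw j - wh j) := ⟨_, rfl⟩
  have fact1' : ∀ j : Fin (N + 1), (Pu j - uh j).eval (lep grid j) = Bf j - T j := by
    intro j; rw [hT]; exact fact1 j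
  -- S
  obtain ⟨S, hS⟩ : ∃ S : ℝ,
      S = ∑ j : Fin (N + 1), Jint (lep grid j) (rep grid j) ((Pw j - wh j) ^ 2) := ⟨_, rfl⟩
  have hSj0 : ∀ j : Fin (N + 1),
      0 ≤ Jint (lep grid j) (rep grid j) ((Pw j - wh j) ^ 2) :=
    fun j => Jint_sq_nonneg (hlr j).le _
  have hS0 : 0 ≤ S := by
    rw [hS]; exact Finset.sum_nonneg fun j _ => hSj0 j
  -- downward recursion for endpoint values
  have keyrec : ∀ m : ℕ, m ≤ N →
      |(Pu ⟨N - m, by omega⟩ - uh ⟨N - m, by omega⟩).eval (lep grid ⟨N - m, by omega⟩)|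
        ≤ ∑ i ∈ Finset.range (m + 1), |T ⟨N - i, by omega⟩| := by
    intro m
    induction m with
    | zero =>
      intro _
      rw [fact1' ⟨N - 0, by omega⟩]
      rw [hBfneg ⟨N - 0, by omega⟩ (by show ¬(N - 0 < N); omega)]
      rw [Finset.sum_range_one, zero_sub, abs_neg]
    | succ m ih =>
      intro hm1
      specialize ih (by omega)
      have hlt : ((⟨N - (m + 1), by omega⟩ : Fin (N + 1)) : ℕ) < N := by
        show N - (m + 1) < N
        omega
      have hval : ((⟨N - m, by omega⟩ : Fin (N + 1)) : ℕ)
          = ((⟨N - (m + 1), by omega⟩ : Fin (N + 1)) : ℕ) + 1 := by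
        show N - m = N - (m + 1) + 1
        omega
      have hBstep : Bf ⟨N - (m + 1), by omega⟩
          = (Pu ⟨N - m, by omega⟩ - uh ⟨N - m, by omega⟩).eval
              (lep grid ⟨N - m, by omega⟩) := by
        rw [hBfpos' ⟨N - (m + 1), by omega⟩ ⟨N - m, by omega⟩ hlt hval,
          hadj ⟨N - (m + 1), by omega⟩ ⟨N - m, by omega⟩ hval]
      rw [fact1' ⟨N - (m + 1), by omega⟩, hBstep, Finset.sum_range_succ]
      exact (abs_sub _ _).trans (add_le_add ih le_rfl)
  -- bound each |T j|
  have hTb : ∀ j : Fin (N + 1), |T j|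
      ≤ Real.sqrt (rep grid j - lep grid j)
        * Real.sqrt (Jint (lep grid j) (rep grid j) ((Pw j - wh j) ^ 2)) := by
    intro j
    have h1 := Jint_CS (hlr j).le (Pw j - wh j) 1
    rw [mul_one, one_pow] at h1
    have h2 : Jint (lep grid j) (rep grid j) 1 = (rep grid j - lep grid j) * 1 := by
      rw [← C_1, Jint_const]
    rw [h2, mul_one] at h1
    have h3 : |T j| = Real.sqrt ((T j) ^ 2) := (Real.sqrt_sq_eq_abs _).symm
    rw [h3, hT]
    calc Real.sqrt ((Jint (lep grid j) (rep grid j) (Pw j - wh j)) ^ 2)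
        ≤ Real.sqrt ((rep grid j - lep grid j)
            * Jint (lep grid j) (rep grid j) ((Pw j - wh j) ^ 2)) := by
          apply Real.sqrt_le_sqrt
          rw [mul_comm]
          exact h1
      _ = Real.sqrt (rep grid j - lep grid j)
            * Real.sqrt (Jint (lep grid j) (rep grid j) ((Pw j - wh j) ^ 2)) :=
          Real.sqrt_mul (hjpos j).le _
  -- sum bound
  have hsumT : (∑ j : Fin (N + 1), |T j|) ≤ Real.sqrt L * Real.sqrt S := by
    have h1 : (∑ j : Fin (N + 1), |T j|)
        ≤ ∑ j : Fin (N + 1), Real.sqrt (rep grid j - lep grid j)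
            * Real.sqrt (Jint (lep grid j) (rep grid j) ((Pw j - wh j) ^ 2)) :=
      Finset.sum_le_sum fun j _ => hTb j
    have h2 := Finset.sum_mul_sq_le_sq_mul_sq Finset.univ
      (fun j : Fin (N + 1) => Real.sqrt (rep grid j - lep grid j))
      (fun j : Fin (N + 1) => Real.sqrt (Jint (lep grid j) (rep grid j) ((Pw j - wh j) ^ 2)))
    have h3 : ∑ j : Fin (N + 1), (Real.sqrt (rep grid j - lep grid j)) ^ 2 = L := by
      rw [← hsumh]
      apply Finset.sum_congr rfl
      intro j _
      exact Real.sq_sqrt (hjpos j).le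
    have h4 : ∑ j : Fin (N + 1),
        (Real.sqrt (Jint (lep grid j) (rep grid j) ((Pw j - wh j) ^ 2))) ^ 2 = S := by
      rw [hS]
      apply Finset.sum_congr rfl
      intro j _
      exact Real.sq_sqrt (hSj0 j)
    rw [h3, h4] at h2
    have h5 : 0 ≤ ∑ j : Fin (N + 1), Real.sqrt (rep grid j - lep grid j)
        * Real.sqrt (Jint (lep grid j) (rep grid j) ((Pw j - wh j) ^ 2)) :=
      Finset.sum_nonneg fun j _ =>
        mul_nonneg (Real.sqrt_nonneg _) (Real.sqrt_nonneg _)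
    have h6 : (∑ j : Fin (N + 1), Real.sqrt (rep grid j - lep grid j)
        * Real.sqrt (Jint (lep grid j) (rep grid j) ((Pw j - wh j) ^ 2)))
        ≤ Real.sqrt (L * S) := by
      rw [Real.le_sqrt h5 (mul_nonneg hL0.le hS0)]
      exact h2
    rw [Real.sqrt_mul hL0.le] at h6
    linarith [h1, h6]
  -- endpoint values bounded
  have hendpt : ∀ j : Fin (N + 1),
      ((Pu j - uh j).eval (lep grid j)) ^ 2 ≤ L * S := by
    intro j
    have hjN : (j : ℕ) ≤ N := by omega
    have h1 := keyrec (N - (j : ℕ)) (by omega)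
    have hjeq : (⟨N - (N - (j : ℕ)), by omega⟩ : Fin (N + 1)) = j := by
      apply Fin.ext
      show N - (N - (j : ℕ)) = (j : ℕ)
      omega
    rw [hjeq] at h1
    have h2 : (∑ i ∈ Finset.range (N - (j : ℕ) + 1), |T ⟨N - i, by omega⟩|)
        ≤ ∑ j' : Fin (N + 1), |T j'| := by
      have hinj : ∀ x ∈ Finset.range (N - (j : ℕ) + 1),
          ∀ y ∈ Finset.range (N - (j : ℕ) + 1),
          (⟨N - x, by omega⟩ : Fin (N + 1)) = ⟨N - y, by omega⟩ → x = y := by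
        intro x hx y hy hxy
        have hx' : x ≤ N := by
          have := Finset.mem_range.mp hx; omega
        have hy' : y ≤ N := by
          have := Finset.mem_range.mp hy; omega
        have hval : N - x = N - y := congrArg Fin.val hxy
        omega
      rw [← Finset.sum_image (f := fun j' => |T j'|) hinj]
      exact Finset.sum_le_sum_of_subset_of_nonneg (Finset.subset_univ _)
        (fun _ _ _ => abs_nonneg _)
    have h3 : |(Pu j - uh j).eval (lep grid j)| ≤ Real.sqrt L * Real.sqrt S := by
      calc |(Pu j - uh j).eval (lep grid j)|
          ≤ ∑ i ∈ Finset.range (N - (j : ℕ) + 1), |T ⟨N - i, by omega⟩| := h1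
        _ ≤ ∑ j' : Fin (N + 1), |T j'| := h2
        _ ≤ Real.sqrt L * Real.sqrt S := hsumT
    have h4 : ((Pu j - uh j).eval (lep grid j)) ^ 2
        ≤ (Real.sqrt L * Real.sqrt S) ^ 2 := by
      rw [← sq_abs]
      exact pow_le_pow_left₀ (abs_nonneg _) h3 2
    calc ((Pu j - uh j).eval (lep grid j)) ^ 2
        ≤ (Real.sqrt L * Real.sqrt S) ^ 2 := h4
      _ = L * S := by
          rw [mul_pow, Real.sq_sqrt hL0.le, Real.sq_sqrt hS0]
  -- total bound
  have hXtot : (∑ j : Fin (N + 1), Jint (lep grid j) (rep grid j) ((Pu j - uh j) ^ 2))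
      ≤ 16 * L ^ 2 * S := by
    have h1 : ∀ j : Fin (N + 1),
        Jint (lep grid j) (rep grid j) ((Pu j - uh j) ^ 2)
          ≤ 2 * (rep grid j - lep grid j) * (L * S)
            + 8 * L ^ 2 * Jint (lep grid j) (rep grid j) ((Pw j - wh j) ^ 2) := by
      intro j
      have h2 := fact2 j
      have h3 := hendpt j
      have h4 := hjpos j
      have h5 := hjle j
      have h6 := hSj0 j
      have e1 : 2 * (rep grid j - lep grid j) * ((Pu j - uh j).eval (lep grid j)) ^ 2
          ≤ 2 * (rep grid j - lep grid j) * (L * S) := by nlinarith [h3, h4]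
      have e2 : 8 * (rep grid j - lep grid j) ^ 2
            * Jint (lep grid j) (rep grid j) ((Pw j - wh j) ^ 2)
          ≤ 8 * L ^ 2 * Jint (lep grid j) (rep grid j) ((Pw j - wh j) ^ 2) := by
        have h7 : (rep grid j - lep grid j) ^ 2 ≤ L ^ 2 := by nlinarith [h4, h5]
        have h8 := mul_le_mul_of_nonneg_right h7 h6
        linarith [h8]
      linarith [h2, e1, e2]
    calc (∑ j : Fin (N + 1), Jint (lep grid j) (rep grid j) ((Pu j - uh j) ^ 2))
        ≤ ∑ j : Fin (N + 1), (2 * (rep grid j - lep grid j) * (L * S)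
            + 8 * L ^ 2 * Jint (lep grid j) (rep grid j) ((Pw j - wh j) ^ 2)) :=
          Finset.sum_le_sum fun j _ => h1 j
      _ = 2 * (L * S) * (∑ j : Fin (N + 1), (rep grid j - lep grid j))
            + 8 * L ^ 2
              * (∑ j : Fin (N + 1), Jint (lep grid j) (rep grid j) ((Pw j - wh j) ^ 2)) := by
          rw [Finset.mul_sum, Finset.mul_sum, ← Finset.sum_add_distrib]
          apply Finset.sum_congr rfl
          intro j _
          ring
      _ = 10 * L ^ 2 * S := by rw [hsumh, ← hS]; ring
      _ ≤ 16 * L ^ 2 * S := by nlinarith [hS0, hL0]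
  -- convert the goal
  have hconvX : (∑ j, cellInt grid j (fun y => ((Pu j).eval y - (uh j).eval y) ^ 2))
      = ∑ j : Fin (N + 1), Jint (lep grid j) (rep grid j) ((Pu j - uh j) ^ 2) := by
    apply Finset.sum_congr rfl
    intro j _
    unfold cellInt Jint
    apply intervalIntegral.integral_congr
    intro y _
    simp [eval_pow, eval_sub]
  have hconvS : (∑ j, cellInt grid j (fun y => ((Pw j).eval y - (wh j).eval y) ^ 2)) = S := by
    rw [hS]
    apply Finset.sum_congr rfl
    intro j _
    unfold cellInt Jint
    apply intervalIntegral.integral_congr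
    intro y _
    simp [eval_pow, eval_sub]
  rw [hconvX, hconvS]
  have hstep1 : Real.sqrt (∑ j : Fin (N + 1),
      Jint (lep grid j) (rep grid j) ((Pu j - uh j) ^ 2)) ≤ 4 * L * Real.sqrt S := by
    calc Real.sqrt (∑ j : Fin (N + 1), Jint (lep grid j) (rep grid j) ((Pu j - uh j) ^ 2))
        ≤ Real.sqrt (16 * L ^ 2 * S) := Real.sqrt_le_sqrt hXtot
      _ = 4 * L * Real.sqrt S := by
          rw [show (16:ℝ) * L ^ 2 * S = (4 * L) ^ 2 * S by ring,
            Real.sqrt_mul (sq_nonneg _), Real.sqrt_sq (by linarith : (0:ℝ) ≤ 4 * L)]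
  have hη : 0 ≤ Real.sqrt (∑ j, cellInt grid j (fun y => (deriv u y - (Pw j).eval y) ^ 2)) :=
    Real.sqrt_nonneg _
  have hsS : 0 ≤ Real.sqrt S := Real.sqrt_nonneg _
  have hLyr : L = yR - yL := hLdef
  nlinarith [hstep1, hη, hsS, hL0]

end
end

section
/- Let z : ℝ × ℝ → ℝ be twice continuously differentiable, satisfying the sine-Gordon equation z_{ys} = sin z for all (y, s), and suppose there is a fixed integer m with z(y + L, s) = z(y, s) + 2πm for all (y, s), where L > 0. Then the quantity H_2 = ∫_0^L z_y(y, s)² dy is independent of s. -/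
/-!
Differentiating under the integral sign and using `z_{ys} = sin z`,
`d/ds ∫₀ᴸ z_y² dy = 2 ∫₀ᴸ sin z · z_y dy = 2 [-cos z]₀ᴸ`, which vanishes because
`z(L, s) - z(0, s) = 2πm`.
-/

open MeasureTheory Set Function Real

theorem intervalIntegral.hasDerivAt_integral_of_continuous {E : Type*} [NormedAddCommGroup E]
    [NormedSpace ℝ E] {F F' : ℝ → ℝ → E} (a b x₀ : ℝ) (hF : ∀ x, Continuous (F x))
    (hF' : Continuous (uncurry F')) (hderiv : ∀ x t, HasDerivAt (fun x => F x t) (F' x t) x) :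
    HasDerivAt (fun x => ∫ t in a..b, F x t) (∫ t in a..b, F' x₀ t) x₀ := by
  obtain ⟨C, hC⟩ := (isCompact_closedBall x₀ 1 |>.prod (isCompact_uIcc (a := a) (b := b))
    ).exists_bound_of_continuousOn hF'.continuousOn
  refine (intervalIntegral.hasDerivAt_integral_of_dominated_loc_of_deriv_le
    (Metric.closedBall_mem_nhds x₀ one_pos) (bound := fun _ => C)
    (Filter.Eventually.of_forall fun x => (hF x).aestronglyMeasurable)
    ((hF x₀).intervalIntegrable a b)
    (hF'.uncurry_left x₀).aestronglyMeasurable ?_ intervalIntegrable_const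
    (Filter.Eventually.of_forall fun t _ x _ => hderiv x t)).2
  exact Filter.Eventually.of_forall fun t ht x hx => hC (x, t) ⟨hx, uIoc_subset_uIcc ht⟩

theorem integral_sin_comp_mul_deriv_eq_zero {g g' : ℝ → ℝ} {a b : ℝ}
    (hg : ∀ x ∈ uIcc a b, HasDerivAt g (g' x) x) (hg' : ContinuousOn g' (uIcc a b))
    (m : ℤ) (hab : g b = g a + m * (2 * π)) :
    ∫ x in a..b, sin (g x) * g' x = 0 := by
  have := intervalIntegral.integral_comp_mul_deriv hg hg' continuous_sin
  simp only [comp_apply] at this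
  rw [this, integral_sin, hab, cos_add_int_mul_two_pi, sub_self]

section PartialDeriv

variable {z : ℝ → ℝ → ℝ}

theorem hasDerivAt_fst_of_differentiable_uncurry (hz : Differentiable ℝ (uncurry z)) (y s : ℝ) :
    HasDerivAt (fun y' => z y' s) (fderiv ℝ (uncurry z) (y, s) (1, 0)) y :=
  (hz (y, s)).hasFDerivAt.comp_hasDerivAt (f := fun y' => (y', s)) y
    ((hasDerivAt_id y).prodMk (hasDerivAt_const y s))

theorem contDiff_deriv_fst {n : WithTop ℕ∞} (hz : ContDiff ℝ (n + 1) (uncurry z)) :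
    ContDiff ℝ n fun p : ℝ × ℝ => deriv (fun y' => z y' p.2) p.1 := by
  have hd := hz.differentiable (by simp)
  have h_fderiv : (fun p : ℝ × ℝ => deriv (fun y' => z y' p.2) p.1) =
      fun p => fderiv ℝ (uncurry z) p (1, 0) :=
    funext fun p => (hasDerivAt_fst_of_differentiable_uncurry hd p.1 p.2).deriv
  rw [h_fderiv]
  exact (hz.fderiv_right le_rfl).clm_apply contDiff_const

theorem hasDerivAt_integral_sq_deriv_fst_of_sineGordon (hz : ContDiff ℝ 2 (uncurry z))
    (heq : ∀ y s, deriv (fun s' => deriv (fun y' => z y' s') y) s = sin (z y s)) (a b s : ℝ) :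
    HasDerivAt (fun s => ∫ y in a..b, deriv (fun y' => z y' s) y ^ 2)
      (2 * ∫ y in a..b, sin (z y s) * deriv (fun y' => z y' s) y) s := by
  have hz_y : ContDiff ℝ 1 fun p : ℝ × ℝ => deriv (fun y' => z y' p.2) p.1 :=
    contDiff_deriv_fst hz
  have hz_ys (y s : ℝ) : HasDerivAt (fun s' => deriv (fun y' => z y' s') y) (sin (z y s)) s := by
    rw [← heq y s]
    exact ((hz_y.differentiable one_ne_zero).comp
      ((differentiable_const y).prodMk differentiable_id) s).hasDerivAt
  have hz_y_sq (y s : ℝ) : HasDerivAt (fun s' => deriv (fun y' => z y' s') y ^ 2)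
      (2 * (sin (z y s) * deriv (fun y' => z y' s) y)) s :=
    ((hz_ys y s).fun_pow 2).congr_deriv (by push_cast; ring)
  have hF' : Continuous (uncurry fun s y => 2 * (sin (z y s) * deriv (fun y' => z y' s) y)) := by
    have hz_swap : Continuous fun p : ℝ × ℝ => z p.2 p.1 := hz.continuous.comp continuous_swap
    have hz_y_swap : Continuous fun p : ℝ × ℝ => deriv (fun y' => z y' p.1) p.2 :=
      hz_y.continuous.comp continuous_swap
    simp only [uncurry_def]
    fun_prop
  rw [← intervalIntegral.integral_const_mul]
  exact intervalIntegral.hasDerivAt_integral_of_continuous a b s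
    (fun s => (hz_y.continuous.comp (continuous_id.prodMk continuous_const)).pow 2) hF'
    (fun s y => hz_y_sq y s)

end PartialDeriv

theorem sineGordon_H2_conserved_general
    (z : ℝ → ℝ → ℝ) (L : ℝ) (m : ℤ)
    (hz : ContDiff ℝ 2 (Function.uncurry z))
    (heq : ∀ y s : ℝ, deriv (fun s' => deriv (fun y' => z y' s') y) s = Real.sin (z y s))
    (hper : ∀ y s : ℝ, z (y + L) s = z y s + 2 * Real.pi * (m : ℝ)) :
    ∀ s₁ s₂ : ℝ,
      (∫ y in (0:ℝ)..L, (deriv (fun y' => z y' s₁) y) ^ 2)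
        = ∫ y in (0:ℝ)..L, (deriv (fun y' => z y' s₂) y) ^ 2 := by
  have hH (s : ℝ) : HasDerivAt (fun s => ∫ y in (0:ℝ)..L, deriv (fun y' => z y' s) y ^ 2) 0 s := by
    have h_period : z L s = z 0 s + m * (2 * π) := by
      rw [← zero_add L, hper]; ring
    have hz_y := (contDiff_deriv_fst (n := 1) hz).continuous
    have h_zero : ∫ y in (0:ℝ)..L, sin (z y s) * deriv (fun y' => z y' s) y = 0 :=
      integral_sin_comp_mul_deriv_eq_zero
        (fun y _ => ((hz.differentiable (by simp)).comp
          (differentiable_id.prodMk (differentiable_const s)) y).hasDerivAt)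
        (hz_y.comp (continuous_id.prodMk continuous_const)).continuousOn m h_period
    simpa only [h_zero, mul_zero] using hasDerivAt_integral_sq_deriv_fst_of_sineGordon hz heq 0 L s
  exact is_const_of_deriv_eq_zero (fun s => (hH s).differentiableAt) (fun s => (hH s).deriv)

/-- **Conservation of `H₂ = ∫ z_y² dy` for the sine-Gordon equation.**
If `z` is `C²`, solves `z_{ys} = sin z`, and satisfies `z(y + L, s) = z(y, s) + 2πm`
for a fixed integer `m` and some `L > 0`, then `∫_0^L z_y(y, s)² dy` does not depend on `s`. -/
theorem sineGordon_H2_conserved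
    (z : ℝ → ℝ → ℝ) (L : ℝ) (hL : 0 < L) (m : ℤ)
    (hz : ContDiff ℝ 2 (Function.uncurry z))
    (heq : ∀ y s : ℝ, deriv (fun s' => deriv (fun y' => z y' s') y) s = Real.sin (z y s))
    (hper : ∀ y s : ℝ, z (y + L) s = z y s + 2 * Real.pi * (m : ℝ)) :
    ∀ s₁ s₂ : ℝ,
      (∫ y in (0:ℝ)..L, (deriv (fun y' => z y' s₁) y) ^ 2)
        = ∫ y in (0:ℝ)..L, (deriv (fun y' => z y' s₂) y) ^ 2 :=
  sineGordon_H2_conserved_general z L m hz heq hper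
end

section
/- Let ρ, u : ℝ × ℝ → ℝ be twice continuously differentiable and solve the coupled dispersionless system ρ_s + (u²/2)_y = 0 and u_{ys} = ρ u, with ρ(y, s) ≠ 0 for all (y, s). Let x : ℝ × ℝ → ℝ be twice continuously differentiable with ∂x/∂y = ρ and ∂x/∂s = −u²/2. Suppose U : ℝ × ℝ → ℝ is twice continuously differentiable and satisfies U(x(y, s), s) = u(y, s) for all (y, s). Then at every point of the form (x(y, s), s), U satisfies the short pulse equation U_{xt} = U + (1/6)(U³)_{xx}. -/
/-!
Write `V = U_x`. Differentiating `U(x(y,s), s) = u(y,s)` in `y` gives `V(x(y,s), s) = u_y / ρ`.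
Differentiating this along `s ↦ (x(y,s), s)`, where `x_s = -u²/2`, and using `u_{ys} = ρu` and
`ρ_s = -u u_y` in the quotient rule gives `V_t - (u²/2) V_x = u (1 + V²)`. Since
`(U³)_xx / 6 = U V² + (U²/2) V_x` and `U = u` along the curve, this is the short pulse equation.
-/

open Function

section PartialDerivatives

variable {𝕜 E : Type*} [NontriviallyNormedField 𝕜] [NormedAddCommGroup E] [NormedSpace 𝕜 E]

theorem DifferentiableAt.hasDerivAt_uncurry_left {g : 𝕜 → 𝕜 → E} {a b : 𝕜}
    (hg : DifferentiableAt 𝕜 (uncurry g) (a, b)) :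
    HasDerivAt (g · b) (fderiv 𝕜 (uncurry g) (a, b) (1, 0)) a := by
  simpa [comp_def] using
    hg.hasFDerivAt.comp_hasDerivAt a ((hasDerivAt_id a).prodMk (hasDerivAt_const a b))

theorem DifferentiableAt.hasDerivAt_uncurry_right {g : 𝕜 → 𝕜 → E} {a b : 𝕜}
    (hg : DifferentiableAt 𝕜 (uncurry g) (a, b)) :
    HasDerivAt (g a ·) (fderiv 𝕜 (uncurry g) (a, b) (0, 1)) b := by
  simpa [comp_def] using
    hg.hasFDerivAt.comp_hasDerivAt b ((hasDerivAt_const b a).prodMk (hasDerivAt_id b))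

theorem DifferentiableAt.differentiableAt_uncurry_left {g : 𝕜 → 𝕜 → E} {a b : 𝕜}
    (hg : DifferentiableAt 𝕜 (uncurry g) (a, b)) : DifferentiableAt 𝕜 (g · b) a :=
  hg.hasDerivAt_uncurry_left.differentiableAt

theorem DifferentiableAt.differentiableAt_uncurry_right {g : 𝕜 → 𝕜 → E} {a b : 𝕜}
    (hg : DifferentiableAt 𝕜 (uncurry g) (a, b)) : DifferentiableAt 𝕜 (g a ·) b :=
  hg.hasDerivAt_uncurry_right.differentiableAt

theorem ContDiff.uncurry_deriv_left {g : 𝕜 → 𝕜 → E} {m n : WithTop ℕ∞}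
    (hg : ContDiff 𝕜 n (uncurry g)) (hmn : m + 1 ≤ n) :
    ContDiff 𝕜 m (uncurry fun a b => deriv (g · b) a) := by
  have hg' := (hg.of_le (le_add_self.trans hmn)).differentiable one_ne_zero
  have h : (uncurry fun a b => deriv (g · b) a) = fun p => fderiv 𝕜 (uncurry g) p (1, 0) := by
    funext ⟨a, b⟩
    exact (hg' (a, b)).hasDerivAt_uncurry_left.deriv
  rw [h]
  exact (hg.fderiv_right hmn).clm_apply contDiff_const

theorem ContDiff.differentiable_deriv_uncurry_left {g : 𝕜 → 𝕜 → E}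
    (hg : ContDiff 𝕜 2 (uncurry g)) (a : 𝕜) : Differentiable 𝕜 fun b => deriv (g · b) a :=
  fun b => ((hg.uncurry_deriv_left (by norm_num)).differentiable one_ne_zero
    (a, b)).differentiableAt_uncurry_right

theorem ContDiff.uncurry_comp_graph {n : WithTop ℕ∞} {F : 𝕜 → 𝕜 → E} {c : 𝕜 → 𝕜 → 𝕜}
    (hF : ContDiff 𝕜 n (uncurry F)) (hc : ContDiff 𝕜 n (uncurry c)) :
    ContDiff 𝕜 n (uncurry fun a b => F (c a b) b) :=
  hF.comp (hc.prodMk contDiff_snd)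

theorem hasDerivAt_uncurry_comp_graph {F : 𝕜 → 𝕜 → E} {c : 𝕜 → 𝕜} {c' s : 𝕜}
    (hF : DifferentiableAt 𝕜 (uncurry F) (c s, s)) (hc : HasDerivAt c c' s) :
    HasDerivAt (fun t => F (c t) t) (c' • deriv (F · s) (c s) + deriv (F (c s) ·) s) s := by
  have hgraph : HasDerivAt (fun t => (c t, t)) (c', 1) s := hc.prodMk (hasDerivAt_id s)
  have h := hF.hasFDerivAt.comp_hasDerivAt_of_eq s hgraph rfl
  have hsplit : ((c', 1) : 𝕜 × 𝕜) = c' • ((1 : 𝕜), (0 : 𝕜)) + ((0 : 𝕜), (1 : 𝕜)) := by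
    simp
  rw [hsplit, map_add, map_smul] at h
  rwa [hF.hasDerivAt_uncurry_left.deriv, hF.hasDerivAt_uncurry_right.deriv]

end PartialDerivatives

theorem deriv_deriv_pow_three {𝕜 : Type*} [NontriviallyNormedField 𝕜] {f : 𝕜 → 𝕜} {a : 𝕜}
    (hf : Differentiable 𝕜 f) (hf' : DifferentiableAt 𝕜 (deriv f) a) :
    deriv (deriv fun x => f x ^ 3) a
      = 6 * f a * deriv f a ^ 2 + 3 * f a ^ 2 * deriv (deriv f) a := by
  have h : (deriv fun x => f x ^ 3) = fun x => 3 * f x ^ 2 * deriv f x := by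
    funext x
    rw [((hf x).hasDerivAt.fun_pow 3).deriv]
    ring
  rw [h, ((((hf a).hasDerivAt.fun_pow 2).const_mul 3).fun_mul hf'.hasDerivAt).deriv]
  ring

theorem hasDerivAt_div_of_CD {𝕜 : Type*} [NontriviallyNormedField 𝕜] {p r : 𝕜 → 𝕜} {s v : 𝕜}
    (hp : HasDerivAt p (r s * v) s) (hr : HasDerivAt r (-(v * p s)) s) (hr0 : r s ≠ 0) :
    HasDerivAt (fun t => p t / r t) (v + v * (p s / r s) ^ 2) s := by
  refine (hp.fun_div hr hr0).congr_deriv ?_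
  field_simp
  ring

theorem hasDerivAt_density_of_CD {ρ u x : ℝ → ℝ → ℝ} {y s : ℝ}
    (hx : ContDiff ℝ 2 (uncurry x)) (hu : Differentiable ℝ (uncurry u))
    (hCD1 : deriv (fun s' => ρ y s') s + deriv (fun y' => (u y' s) ^ 2 / 2) y = 0)
    (hxy : ∀ s' : ℝ, deriv (fun y' => x y' s') y = ρ y s') :
    HasDerivAt (ρ y ·) (-(u y s * deriv (u · s) y)) s := by
  have hρ : (ρ y ·) = fun s' => deriv (x · s') y := funext fun s' => (hxy s').symm
  have hsq : deriv (fun y' => u y' s ^ 2 / 2) y = u y s * deriv (u · s) y := by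
    rw [(((hu (y, s)).differentiableAt_uncurry_left.hasDerivAt.fun_pow 2).div_const
      2).deriv]
    ring
  refine (hρ ▸ hx.differentiable_deriv_uncurry_left y s).hasDerivAt.congr_deriv ?_
  linarith

theorem deriv_time_deriv_space_of_CD {ρ u x U : ℝ → ℝ → ℝ} {y s : ℝ}
    (hx : ContDiff ℝ 2 (uncurry x)) (hu : ContDiff ℝ 2 (uncurry u))
    (hU : ContDiff ℝ 2 (uncurry U))
    (hCD1 : deriv (fun s' => ρ y s') s + deriv (fun y' => (u y' s) ^ 2 / 2) y = 0)
    (hCD2 : deriv (fun s' => deriv (fun y' => u y' s') y) s = ρ y s * u y s)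
    (hρ0 : ∀ t : ℝ, ρ y t ≠ 0)
    (hxy : ∀ t : ℝ, deriv (fun y' => x y' t) y = ρ y t)
    (hxs : deriv (fun s' => x y s') s = -(u y s) ^ 2 / 2)
    (hUu : ∀ y s : ℝ, U (x y s) s = u y s) :
    deriv (fun t => deriv (U · t) (x y s)) s
      = u y s + u y s * deriv (U · s) (x y s) ^ 2
        + u y s ^ 2 / 2 * deriv (deriv (U · s)) (x y s) := by
  have hxd := hx.differentiable two_ne_zero
  set V : ℝ → ℝ → ℝ := fun a t => deriv (U · t) a
  have hVd : Differentiable ℝ (uncurry V) :=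
    (hU.uncurry_deriv_left (by norm_num)).differentiable one_ne_zero
  have hux (s : ℝ) : deriv (u · s) y = V (x y s) s * ρ y s := by
    have hx_y : HasDerivAt (x · s) (ρ y s) y :=
      hxy s ▸ (hxd (y, s)).differentiableAt_uncurry_left.hasDerivAt
    have hU_x := ((hU.differentiable two_ne_zero) (x y s, s)).differentiableAt_uncurry_left
    simp only [← hUu]
    exact (hU_x.hasDerivAt.comp y hx_y).deriv
  have hV : (fun t => V (x y t) t) = fun t => deriv (u · t) y / ρ y t := by
    funext t
    rw [hux, mul_div_cancel_right₀ _ (hρ0 t)]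
  have hx_s : HasDerivAt (x y ·) (-(u y s) ^ 2 / 2) s :=
    hxs ▸ (hxd (y, s)).differentiableAt_uncurry_right.hasDerivAt
  have hux_s : HasDerivAt (fun s' => deriv (u · s') y) (ρ y s * u y s) s :=
    hCD2 ▸ (hu.differentiable_deriv_uncurry_left y s).hasDerivAt
  have hρ_s := hasDerivAt_density_of_CD hx (hu.differentiable two_ne_zero) hCD1 hxy
  have hV_s := hasDerivAt_uncurry_comp_graph (hVd (x y s, s)) hx_s
  rw [hV] at hV_s
  have h := hV_s.unique (hasDerivAt_div_of_CD hux_s hρ_s (hρ0 s))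
  rw [hux, mul_div_cancel_right₀ _ (hρ0 s), smul_eq_mul] at h
  linarith

theorem hodograph_CD_to_shortPulse_general
    (ρ u x U : ℝ → ℝ → ℝ)
    (hx : ContDiff ℝ 2 (Function.uncurry x))
    (hU : ContDiff ℝ 2 (Function.uncurry U))
    (hCD1 : ∀ y s : ℝ, deriv (fun s' => ρ y s') s + deriv (fun y' => (u y' s) ^ 2 / 2) y = 0)
    (hCD2 : ∀ y s : ℝ, deriv (fun s' => deriv (fun y' => u y' s') y) s = ρ y s * u y s)
    (hρ0 : ∀ y s : ℝ, ρ y s ≠ 0)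
    (hxy : ∀ y s : ℝ, deriv (fun y' => x y' s) y = ρ y s)
    (hxs : ∀ y s : ℝ, deriv (fun s' => x y s') s = -(u y s) ^ 2 / 2)
    (hUu : ∀ y s : ℝ, U (x y s) s = u y s) :
    ∀ y s : ℝ,
      deriv (fun t => deriv (fun x' => U x' t) (x y s)) s
        = U (x y s) s
          + (1 / 6) * deriv (fun x' => deriv (fun x'' => (U x'' s) ^ 3) x') (x y s) := by
  intro y s
  have hu : ContDiff ℝ 2 (uncurry u) := by
    simpa only [hUu] using hU.uncurry_comp_graph hx
  have hUd := hU.differentiable two_ne_zero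
  have hU_xx : DifferentiableAt ℝ (deriv (U · s)) (x y s) :=
    ((hU.uncurry_deriv_left (by norm_num)).differentiable one_ne_zero
      (x y s, s)).differentiableAt_uncurry_left
  rw [deriv_time_deriv_space_of_CD hx hu hU (hCD1 y s) (hCD2 y s) (hρ0 y) (hxy y) (hxs y s) hUu,
    deriv_deriv_pow_three (fun a => (hUd (a, s)).differentiableAt_uncurry_left) hU_xx,
    hUu]
  ring

/-- **Hodograph transformation from the coupled dispersionless system to the short pulse
equation.** If `(ρ, u)` is a `C²` solution of the CD system `ρ_s + (u²/2)_y = 0`, `u_{ys} = ρu`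
with `ρ ≠ 0` everywhere, `x(y,s)` satisfies `x_y = ρ`, `x_s = -u²/2`, and `U` is a `C²` function
with `U(x(y,s), s) = u(y,s)`, then at every point `(x(y,s), s)` the function `U` satisfies the
short pulse equation `U_{xt} = U + (1/6)(U³)_{xx}`. -/
theorem hodograph_CD_to_shortPulse
    (ρ u x U : ℝ → ℝ → ℝ)
    (hρ : ContDiff ℝ 2 (Function.uncurry ρ))
    (hu : ContDiff ℝ 2 (Function.uncurry u))
    (hx : ContDiff ℝ 2 (Function.uncurry x))
    (hU : ContDiff ℝ 2 (Function.uncurry U))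
    (hCD1 : ∀ y s : ℝ, deriv (fun s' => ρ y s') s + deriv (fun y' => (u y' s) ^ 2 / 2) y = 0)
    (hCD2 : ∀ y s : ℝ, deriv (fun s' => deriv (fun y' => u y' s') y) s = ρ y s * u y s)
    (hρ0 : ∀ y s : ℝ, ρ y s ≠ 0)
    (hxy : ∀ y s : ℝ, deriv (fun y' => x y' s) y = ρ y s)
    (hxs : ∀ y s : ℝ, deriv (fun s' => x y s') s = -(u y s) ^ 2 / 2)
    (hUu : ∀ y s : ℝ, U (x y s) s = u y s) :
    ∀ y s : ℝ,
      deriv (fun t => deriv (fun x' => U x' t) (x y s)) s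
        = U (x y s) s
          + (1 / 6) * deriv (fun x' => deriv (fun x'' => (U x'' s) ^ 3) x') (x y s) :=
  hodograph_CD_to_shortPulse_general ρ u x U hx hU hCD1 hCD2 hρ0 hxy hxs hUu
end
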